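/- arXiv:1908.09424 — 7 statements merged into one kernel-verified Lean document; each statement's English description precedes it below -/
import Mathlib

section
/- If ω : [0,∞) → ℝ is nonnegative and satisfies |ω(y)| ≤ M(1+y)^q for some 0 < q < γ, then the integral ∫₀^∞ K(x,y) ω(y) dy converges (is finite) for every x > 0, where K(x,y) = |y-x|^{-γ} - |x+y|^{-γ}. -/
open Real MeasureTheory

/-- `|t| ^ r` is interval integrable for `-1 < r`. -/
lemma absRpowIntervalIntegrable {r : ℝ} (hr : -1 < r) (a b : ℝ) :
    IntervalIntegrable (fun t : ℝ => |t| ^ r) volume a b := by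
  have key : ∀ c : ℝ, 0 ≤ c → IntervalIntegrable (fun t : ℝ => |t| ^ r) volume 0 c := by
    intro c hc
    rw [intervalIntegrable_iff, Set.uIoc_of_le hc]
    have h1 : IntegrableOn (fun t : ℝ => t ^ r) (Set.Ioc 0 c) := by
      rw [← Set.uIoc_of_le hc, ← intervalIntegrable_iff]
      exact intervalIntegral.intervalIntegrable_rpow' hr
    exact h1.congr_fun (fun t ht => by rw [abs_of_pos ht.1]) measurableSet_Ioc
  have key2 : ∀ c : ℝ, IntervalIntegrable (fun t : ℝ => |t| ^ r) volume 0 c := by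
    intro c
    rcases le_total 0 c with hc | hc
    · exact key c hc
    · rw [IntervalIntegrable.iff_comp_neg]
      simp only [abs_neg, neg_zero]
      exact key (-c) (by linarith)
  exact (key2 a).symm.trans (key2 b)

/-- Tangent-line type bound from Bernoulli's inequality:
for `0 < a ≤ b` and `0 < γ ≤ 1`, `a ^ (-γ) - b ^ (-γ) ≤ γ * (b - a) * a ^ (-1 - γ)`. -/
lemma rpowNegSubLe {a b γ : ℝ} (hγ0 : 0 < γ) (hγ1 : γ ≤ 1) (ha : 0 < a) (hab : a ≤ b) :
    a ^ (-γ) - b ^ (-γ) ≤ γ * (b - a) * a ^ (-1 - γ) := by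
  have hb : 0 < b := lt_of_lt_of_le ha hab
  have hA : (0:ℝ) < a ^ γ := Real.rpow_pos_of_pos ha γ
  have hB : (0:ℝ) < b ^ γ := Real.rpow_pos_of_pos hb γ
  have hAB : a ^ γ ≤ b ^ γ := Real.rpow_le_rpow ha.le hab hγ0.le
  -- Bernoulli: (b/a)^γ ≤ 1 + γ*(b-a)/a
  have hbern : (b / a) ^ γ ≤ 1 + γ * ((b - a) / a) := by
    have hs : (-1:ℝ) ≤ (b - a) / a := by
      have : (0:ℝ) ≤ (b - a) / a := div_nonneg (by linarith) ha.le
      linarith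
    have hber := rpow_one_add_le_one_add_mul_self hs hγ0.le hγ1
    have he : 1 + (b - a) / a = b / a := by field_simp; ring
    rwa [he] at hber
  have hdiv : (b / a) ^ γ = b ^ γ / a ^ γ := Real.div_rpow hb.le ha.le γ
  have h1 : b ^ γ - a ^ γ ≤ γ * (b - a) * a ^ (γ - 1) := by
    rw [hdiv] at hbern
    have h2 : b ^ γ ≤ a ^ γ + γ * ((b - a) / a) * a ^ γ := by
      have := mul_le_mul_of_nonneg_right hbern hA.le
      rw [div_mul_cancel₀ _ (ne_of_gt hA)] at this
      linarith
    have h3 : γ * ((b - a) / a) * a ^ γ = γ * (b - a) * a ^ (γ - 1) := by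
      rw [Real.rpow_sub ha, Real.rpow_one]
      field_simp
    linarith [h3 ▸ h2]
  -- a^(-γ) - b^(-γ) = (b^γ - a^γ)/(a^γ * b^γ)
  have heq : a ^ (-γ) - b ^ (-γ) = (b ^ γ - a ^ γ) / (a ^ γ * b ^ γ) := by
    rw [Real.rpow_neg ha.le, Real.rpow_neg hb.le]
    field_simp
  rw [heq]
  have step1 : (b ^ γ - a ^ γ) / (a ^ γ * b ^ γ) ≤ (b ^ γ - a ^ γ) / (a ^ γ * a ^ γ) := by
    apply div_le_div_of_nonneg_left (by linarith) (by positivity)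
    exact mul_le_mul_of_nonneg_left hAB hA.le
  have step2 : (b ^ γ - a ^ γ) / (a ^ γ * a ^ γ) ≤ γ * (b - a) * a ^ (γ - 1) / (a ^ γ * a ^ γ) :=
    div_le_div_of_nonneg_right h1 (by positivity)
  have step3 : γ * (b - a) * a ^ (γ - 1) / (a ^ γ * a ^ γ) = γ * (b - a) * a ^ (-1 - γ) := by
    rw [← Real.rpow_add ha, mul_div_assoc, ← Real.rpow_sub ha]
    ring_nf
  calc (b ^ γ - a ^ γ) / (a ^ γ * b ^ γ) ≤ (b ^ γ - a ^ γ) / (a ^ γ * a ^ γ) := step1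
    _ ≤ γ * (b - a) * a ^ (γ - 1) / (a ^ γ * a ^ γ) := step2
    _ = γ * (b - a) * a ^ (-1 - γ) := step3

theorem velocity_integral_converges (γ q : ℝ) (hγ : 0 < γ) (hγ1 : γ < 1)
    (hq : 0 < q) (hqγ : q < γ) (ω : ℝ → ℝ) (hmeas : Measurable ω)
    (hnonneg : ∀ y, 0 ≤ y → 0 ≤ ω y)
    (M : ℝ) (hbound : ∀ y, 0 ≤ y → |ω y| ≤ M * (1 + y) ^ q)
    (x : ℝ) (hx : 0 < x) :
    IntegrableOn (fun y => (1 / |y - x| ^ γ - 1 / |x + y| ^ γ) * ω y)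
      (Set.Ioi (0 : ℝ)) := by
  have hM : 0 ≤ M := le_trans (abs_nonneg _) (by simpa using hbound 0 le_rfl)
  have h2x : (0:ℝ) < 2 * x := by linarith
  set f : ℝ → ℝ := fun y => (1 / |y - x| ^ γ - 1 / |x + y| ^ γ) * ω y with hfdef
  -- measurability
  have hfm : Measurable f := by
    apply Measurable.mul _ hmeas
    apply Measurable.sub
    · exact measurable_const.div (((measurable_id.sub measurable_const).abs).pow measurable_const)
    · exact measurable_const.div (((measurable_const.add measurable_id).abs).pow measurable_const)
  -- rewrite 1 / |t| ^ γ as |t| ^ (-γ)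
  have hrw : ∀ t : ℝ, 1 / |t| ^ γ = |t| ^ (-γ) := fun t => by
    rw [Real.rpow_neg (abs_nonneg t), one_div]
  -- split the domain
  have hsplit : Set.Ioc (0:ℝ) (2*x) ∪ Set.Ioi (2*x) = Set.Ioi (0:ℝ) :=
    Set.Ioc_union_Ioi_eq_Ioi (by linarith)
  rw [← hsplit]
  apply MeasureTheory.IntegrableOn.union
  · -- on (0, 2x] : dominate by M (1+2x)^q (|y-x|^(-γ) + x^(-γ))
    have hint : IntegrableOn
        (fun y : ℝ => M * (1 + 2*x) ^ q * (|y - x| ^ (-γ) + x ^ (-γ)))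
        (Set.Ioc 0 (2*x)) := by
      apply Integrable.const_mul
      apply Integrable.add
      · have h2 := (absRpowIntervalIntegrable (show (-1:ℝ) < -γ by linarith) (-x) x).comp_sub_right x
        have h3 : IntervalIntegrable (fun t : ℝ => |t - x| ^ (-γ)) volume 0 (2*x) := by
          have e1 : -x + x = 0 := by ring
          have e2 : x + x = 2*x := by ring
          rwa [e1, e2] at h2
        rw [intervalIntegrable_iff, Set.uIoc_of_le h2x.le] at h3
        exact h3
      · exact integrableOn_const measure_Ioc_lt_top.ne
    refine Integrable.mono' hint hfm.aestronglyMeasurable.restrict ?_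
    rw [ae_restrict_iff' measurableSet_Ioc]
    filter_upwards with y hy
    obtain ⟨hy0, hy2⟩ := hy
    rw [Real.norm_eq_abs, hfdef]
    simp only
    rw [abs_mul]
    have hK : |1 / |y - x| ^ γ - 1 / |x + y| ^ γ| ≤ |y - x| ^ (-γ) + x ^ (-γ) := by
      rw [hrw, hrw]
      have h1 : |x + y| ^ (-γ) ≤ x ^ (-γ) := by
        rw [abs_of_pos (show (0:ℝ) < x + y by linarith)]
        exact Real.rpow_le_rpow_of_nonpos hx (by linarith) (by linarith)
      have hA : (0:ℝ) ≤ |y - x| ^ (-γ) := Real.rpow_nonneg (abs_nonneg _) _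
      have hB : (0:ℝ) ≤ |x + y| ^ (-γ) := Real.rpow_nonneg (abs_nonneg _) _
      rw [abs_sub_le_iff]
      constructor <;> linarith
    have hω : |ω y| ≤ M * (1 + 2*x) ^ q := by
      calc |ω y| ≤ M * (1 + y) ^ q := hbound y hy0.le
        _ ≤ M * (1 + 2*x) ^ q :=
          mul_le_mul_of_nonneg_left
            (Real.rpow_le_rpow (by linarith) (by linarith) hq.le) hM
    calc |1 / |y - x| ^ γ - 1 / |x + y| ^ γ| * |ω y|
        ≤ (|y - x| ^ (-γ) + x ^ (-γ)) * (M * (1 + 2*x) ^ q) :=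
          mul_le_mul hK hω (abs_nonneg _)
            (by positivity)
      _ = M * (1 + 2*x) ^ q * (|y - x| ^ (-γ) + x ^ (-γ)) := by ring
  · -- on (2x, ∞) : dominate by C₂ * y ^ (q - 1 - γ)
    have hc0 : (0:ℝ) < 1 / (2*x) := div_pos one_pos h2x
    have hc1 : (0:ℝ) < 1 + 1 / (2*x) := by linarith
    set C₂ : ℝ := (γ * (2*x) * (1/2 : ℝ) ^ (-1-γ)) * (M * (1 + 1/(2*x)) ^ q) with hC₂
    have hint : IntegrableOn (fun y : ℝ => C₂ * y ^ (q - 1 - γ)) (Set.Ioi (2*x)) :=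
      (integrableOn_Ioi_rpow_of_lt (by linarith) h2x).const_mul C₂
    refine Integrable.mono' hint hfm.aestronglyMeasurable.restrict ?_
    rw [ae_restrict_iff' measurableSet_Ioi]
    filter_upwards with y hy
    have hy2x : 2*x < y := hy
    have hy0 : (0:ℝ) < y := lt_trans h2x hy2x
    have hyx : (0:ℝ) < y - x := by linarith
    rw [Real.norm_eq_abs, hfdef]
    simp only
    rw [abs_mul]
    -- bound on the kernel
    have hKabs : |1 / |y - x| ^ γ - 1 / |x + y| ^ γ|
        ≤ γ * (2*x) * (y - x) ^ (-1-γ) := by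
      rw [hrw, hrw, abs_of_pos hyx, abs_of_pos (show (0:ℝ) < x + y by linarith)]
      rw [abs_of_nonneg (sub_nonneg.2
        (Real.rpow_le_rpow_of_nonpos hyx (by linarith) (by linarith)))]
      have hkey := rpowNegSubLe hγ hγ1.le hyx (show y - x ≤ x + y by linarith)
      calc (y - x) ^ (-γ) - (x + y) ^ (-γ)
          ≤ γ * ((x + y) - (y - x)) * (y - x) ^ (-1 - γ) := hkey
        _ = γ * (2*x) * (y - x) ^ (-1-γ) := by rw [show (x + y) - (y - x) = 2*x by ring]
    have h5 : (y - x) ^ (-1-γ) ≤ (y * (1/2 : ℝ)) ^ (-1-γ) :=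
      Real.rpow_le_rpow_of_nonpos (by linarith) (by linarith) (by linarith)
    have h6 : (y * (1/2 : ℝ)) ^ (-1-γ) = y ^ (-1-γ) * (1/2 : ℝ) ^ (-1-γ) :=
      Real.mul_rpow hy0.le (by norm_num)
    -- bound on ω
    have hω2 : |ω y| ≤ M * ((1 + 1/(2*x)) ^ q * y ^ q) := by
      have h7 : 1 + y ≤ (1 + 1/(2*x)) * y := by
        have h8 : (1:ℝ) ≤ y / (2*x) := (one_le_div h2x).2 hy2x.le
        have h9 : (1 + 1/(2*x)) * y = y + y / (2*x) := by field_simp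
        rw [h9]
        have : (1:ℝ) ≤ y / (2*x) := h8
        linarith [(le_div_iff₀ h2x).mp h8]
      calc |ω y| ≤ M * (1 + y) ^ q := hbound y hy0.le
        _ ≤ M * ((1 + 1/(2*x)) * y) ^ q :=
            mul_le_mul_of_nonneg_left
              (Real.rpow_le_rpow (by linarith) h7 hq.le) hM
        _ = M * ((1 + 1/(2*x)) ^ q * y ^ q) := by
            rw [Real.mul_rpow hc1.le hy0.le]
    have hyy : y ^ (-1-γ) * y ^ q = y ^ (q - 1 - γ) := by
      rw [← Real.rpow_add hy0]; ring_nf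
    have hKnn : (0:ℝ) ≤ γ * (2*x) * (y - x) ^ (-1-γ) :=
      mul_nonneg (mul_nonneg hγ.le h2x.le) (Real.rpow_nonneg hyx.le _)
    calc |1 / |y - x| ^ γ - 1 / |x + y| ^ γ| * |ω y|
        ≤ (γ * (2*x) * (y - x) ^ (-1-γ)) * (M * ((1 + 1/(2*x)) ^ q * y ^ q)) :=
          mul_le_mul hKabs hω2 (abs_nonneg _) hKnn
      _ ≤ (γ * (2*x) * (y * (1/2 : ℝ)) ^ (-1-γ)) * (M * ((1 + 1/(2*x)) ^ q * y ^ q)) := by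
          apply mul_le_mul_of_nonneg_right _
            (by
              apply mul_nonneg hM
              exact mul_nonneg (Real.rpow_nonneg hc1.le _) (Real.rpow_nonneg hy0.le _))
          exact mul_le_mul_of_nonneg_left h5 (mul_nonneg hγ.le h2x.le)
      _ = (γ * (2*x) * (1/2 : ℝ) ^ (-1-γ)) * (M * (1 + 1/(2*x)) ^ q) * (y ^ (-1-γ) * y ^ q) := by
          rw [h6]; ring
      _ = C₂ * y ^ (q - 1 - γ) := by rw [hyy, hC₂]
end

section
/- For 0 < q < γ < 1, the integral C = ∫₀^∞ K(1,z)(1+z)^q dz is finite, where K(1,z) = |z-1|^{-γ} - |z+1|^{-γ}. -/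
open Real MeasureTheory

/-- Key convexity bound: for `0 < γ ≤ 1`, `0 < a ≤ b`,
`a ^ (-γ) - b ^ (-γ) ≤ γ * (b - a) * a ^ (-1 - γ)`. -/
lemma rpow_neg_sub_le (γ : ℝ) (hγ0 : 0 < γ) (hγ1 : γ ≤ 1) {a b : ℝ} (ha : 0 < a)
    (hab : a ≤ b) : a ^ (-γ) - b ^ (-γ) ≤ γ * (b - a) * a ^ (-1 - γ) := by
  have hb : 0 < b := ha.trans_le hab
  have hA : 0 < a ^ γ := rpow_pos_of_pos ha γ
  have hB : 0 < b ^ γ := rpow_pos_of_pos hb γ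
  have hAB : a ^ γ ≤ b ^ γ := rpow_le_rpow ha.le hab hγ0.le
  -- Bernoulli bound: b^γ ≤ a^γ + γ*(b-a)*a^γ/a
  have h1 : (1 : ℝ) + (b - a) / a = b / a := by field_simp; ring
  have h2 : (b / a) ^ γ ≤ 1 + γ * ((b - a) / a) := by
    rw [← h1]
    exact rpow_one_add_le_one_add_mul_self
      (by have := div_nonneg (sub_nonneg.2 hab) ha.le; linarith) hγ0.le hγ1
  rw [div_rpow hb.le ha.le] at h2
  have h3 : a * b ^ γ ≤ a * a ^ γ + γ * (b - a) * a ^ γ := by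
    have h := mul_le_mul_of_nonneg_left h2 (by positivity : (0:ℝ) ≤ a * a ^ γ)
    have lhs_eq : a * a ^ γ * (b ^ γ / a ^ γ) = a * b ^ γ := by
      field_simp
    have rhs_eq : a * a ^ γ * (1 + γ * ((b - a) / a)) = a * a ^ γ + γ * (b - a) * a ^ γ := by
      field_simp
    rw [lhs_eq, rhs_eq] at h
    exact h
  -- rewrite negative powers
  have e1 : a ^ (-γ) = (a ^ γ)⁻¹ := rpow_neg ha.le γ
  have e2 : b ^ (-γ) = (b ^ γ)⁻¹ := rpow_neg hb.le γ
  have e3 : a ^ (-1 - γ) = (a * a ^ γ)⁻¹ := by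
    rw [show (-1 - γ : ℝ) = (-1) + (-γ) by ring, rpow_add ha, rpow_neg_one, rpow_neg ha.le,
      mul_inv]
  rw [e1, e2, e3]
  have hqn : 0 ≤ γ * (b - a) := mul_nonneg hγ0.le (by linarith)
  rw [inv_sub_inv hA.ne' hB.ne', div_le_iff₀ (by positivity)]
  have heq : γ * (b - a) * (a * a ^ γ)⁻¹ * (a ^ γ * b ^ γ) = γ * (b - a) * b ^ γ / a := by
    field_simp
  rw [heq, le_div_iff₀ ha]
  nlinarith [h3, mul_le_mul_of_nonneg_left hAB hqn]

theorem kernel_weighted_integrable (γ q : ℝ) (hq : 0 < q) (hqγ : q < γ) (hγ1 : γ < 1) :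
    IntegrableOn (fun z => (1 / |z - 1| ^ γ - 1 / |z + 1| ^ γ) * (1 + z) ^ q)
      (Set.Ioi (0 : ℝ)) := by
  have hγ0 : 0 < γ := hq.trans hqγ
  set f : ℝ → ℝ := fun z => (1 / |z - 1| ^ γ - 1 / |z + 1| ^ γ) * (1 + z) ^ q with hf
  have hmeas : Measurable f := by
    have c1 : Continuous fun z : ℝ => |z - 1| ^ γ :=
      (continuous_abs.comp (continuous_id.sub continuous_const)).rpow_const
        (fun _ => Or.inr hγ0.le)
    have c2 : Continuous fun z : ℝ => |z + 1| ^ γ :=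
      (continuous_abs.comp (continuous_id.add continuous_const)).rpow_const
        (fun _ => Or.inr hγ0.le)
    have c3 : Continuous fun z : ℝ => (1 + z) ^ q :=
      (continuous_const.add continuous_id).rpow_const (fun _ => Or.inr hq.le)
    exact ((measurable_const.div c1.measurable).sub
      (measurable_const.div c2.measurable)).mul c3.measurable
  -- part 1 : on Ioc 0 2
  have base : IntegrableOn (fun x : ℝ => x ^ (-γ)) (Set.Ioc 0 1) := by
    rw [← intervalIntegrable_iff_integrableOn_Ioc_of_le zero_le_one]
    exact intervalIntegral.intervalIntegrable_rpow' (by linarith)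
  have pos : IntegrableOn (fun x : ℝ => |x| ^ (-γ)) (Set.Ioc 0 1) :=
    base.congr_fun (fun x hx => by rw [abs_of_pos hx.1]) measurableSet_Ioc
  have Jpos : IntervalIntegrable (fun x : ℝ => |x| ^ (-γ)) volume 0 1 :=
    (intervalIntegrable_iff_integrableOn_Ioc_of_le zero_le_one).mpr pos
  have Jneg : IntervalIntegrable (fun x : ℝ => |x| ^ (-γ)) volume (-1) 0 := by
    have h := (IntervalIntegrable.iff_comp_neg (f := fun x : ℝ => |x| ^ (-γ)) (a := 0) (b := 1)).mp Jpos
    simp only [abs_neg, neg_zero, neg_neg] at h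
    exact h.symm
  have J : IntervalIntegrable (fun x : ℝ => |x| ^ (-γ)) volume (-1) 1 := Jneg.trans Jpos
  have hsing : IntegrableOn (fun z : ℝ => |z - 1| ^ (-γ)) (Set.Ioc 0 2) := by
    have h := J.comp_sub_right 1
    rw [intervalIntegrable_iff_integrableOn_Ioc_of_le (by norm_num)] at h
    norm_num at h
    exact h
  have part1 : IntegrableOn f (Set.Ioc 0 2) := by
    have hg1 : IntegrableOn (fun z : ℝ => (|z - 1| ^ (-γ) + 1) * 3 ^ q) (Set.Ioc 0 2) := by
      apply Integrable.mul_const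
      exact hsing.add ((integrableOn_const_iff (C := (1:ℝ))).mpr (Or.inr measure_Ioc_lt_top))
    apply Integrable.mono' hg1 hmeas.aestronglyMeasurable
    rw [ae_restrict_iff' measurableSet_Ioc]
    filter_upwards with z hz
    obtain ⟨hz0, hz2⟩ := hz
    have h1 : 0 ≤ 1 / |z - 1| ^ γ := by positivity
    have h2' : (1 : ℝ) ≤ |z + 1| := by rw [abs_of_pos (by linarith)]; linarith
    have h2 : 1 / |z + 1| ^ γ ≤ 1 := by
      rw [div_le_one (by positivity)]
      exact one_le_rpow h2' hγ0.le
    have h2'' : 0 ≤ 1 / |z + 1| ^ γ := by positivity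
    have hw : 0 ≤ (1 + z) ^ q := rpow_nonneg (by linarith) q
    have hw3 : (1 + z) ^ q ≤ 3 ^ q := rpow_le_rpow (by linarith) (by linarith) hq.le
    rw [Real.norm_eq_abs, hf, abs_mul, abs_of_nonneg hw]
    have habs : |1 / |z - 1| ^ γ - 1 / |z + 1| ^ γ| ≤ |z - 1| ^ (-γ) + 1 := by
      rw [rpow_neg (abs_nonneg _), ← one_div]
      refine (abs_sub _ _).trans ?_
      rw [abs_of_nonneg h1, abs_of_nonneg h2'']
      linarith
    exact mul_le_mul habs hw3 hw (by positivity)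
  -- part 2 : on Ioi 2
  have part2 : IntegrableOn f (Set.Ioi 2) := by
    set C : ℝ := γ * 2 * 2 ^ (1 + γ) * 2 ^ q with hC
    have hg2 : IntegrableOn (fun z : ℝ => C * z ^ (q - γ - 1)) (Set.Ioi 2) :=
      (integrableOn_Ioi_rpow_of_lt (by linarith) two_pos).const_mul C
    apply Integrable.mono' hg2 hmeas.aestronglyMeasurable
    rw [ae_restrict_iff' measurableSet_Ioi]
    filter_upwards with z hz
    rw [Set.mem_Ioi] at hz
    have hz0 : (0:ℝ) < z := by linarith
    have hza : (0:ℝ) < z - 1 := by linarith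
    have hzb : (0:ℝ) < z + 1 := by linarith
    have e1 : |z - 1| = z - 1 := abs_of_pos hza
    have e2 : |z + 1| = z + 1 := abs_of_pos hzb
    have efz : f z = ((z - 1) ^ (-γ) - (z + 1) ^ (-γ)) * (1 + z) ^ q := by
      rw [hf]
      simp only [e1, e2, rpow_neg hza.le, rpow_neg hzb.le, one_div]
    have hdnn : 0 ≤ (z - 1) ^ (-γ) - (z + 1) ^ (-γ) := by
      have := rpow_le_rpow_of_nonpos hza (by linarith : z - 1 ≤ z + 1) (by linarith : -γ ≤ 0)
      linarith
    have hwnn : 0 ≤ (1 + z) ^ q := rpow_nonneg (by linarith) q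
    have hfnn : 0 ≤ f z := by rw [efz]; exact mul_nonneg hdnn hwnn
    rw [Real.norm_eq_abs, abs_of_nonneg hfnn, efz]
    -- bound the difference
    have hd : (z - 1) ^ (-γ) - (z + 1) ^ (-γ) ≤ γ * 2 * (z - 1) ^ (-1 - γ) := by
      have := rpow_neg_sub_le γ hγ0 hγ1.le hza (by linarith : z - 1 ≤ z + 1)
      have h22 : (z + 1) - (z - 1) = 2 := by ring
      rw [h22] at this
      linarith
    have hd2 : (z - 1) ^ (-1 - γ) ≤ (z / 2) ^ (-1 - γ) :=
      rpow_le_rpow_of_nonpos (by linarith) (by linarith) (by linarith)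
    have h2e : ((2:ℝ)) ^ (-1 - γ) = (2 ^ (1 + γ))⁻¹ := by
      rw [← rpow_neg (by norm_num : (0:ℝ) ≤ 2)]
      congr 1
      ring
    have hd3 : (z / 2) ^ (-1 - γ) = 2 ^ (1 + γ) * z ^ (-1 - γ) := by
      rw [div_rpow hz0.le (by norm_num), h2e]
      have h2ne : ((2:ℝ) ^ (1 + γ)) ≠ 0 := by positivity
      field_simp
    have hw2 : (1 + z) ^ q ≤ 2 ^ q * z ^ q := by
      rw [← mul_rpow (by norm_num) hz0.le]
      exact rpow_le_rpow (by linarith) (by linarith) hq.le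
    have hzz : z ^ (-1 - γ) * z ^ q = z ^ (q - γ - 1) := by
      rw [← rpow_add hz0]; ring_nf
    calc ((z - 1) ^ (-γ) - (z + 1) ^ (-γ)) * (1 + z) ^ q
        ≤ (γ * 2 * (z - 1) ^ (-1 - γ)) * ((1 + z) ^ q) := by
          apply mul_le_mul_of_nonneg_right hd hwnn
      _ ≤ (γ * 2 * (2 ^ (1 + γ) * z ^ (-1 - γ))) * (2 ^ q * z ^ q) := by
          apply mul_le_mul
          · apply mul_le_mul_of_nonneg_left (hd2.trans_eq hd3) (by positivity)
          · exact hw2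
          · exact hwnn
          · positivity
      _ = C * (z ^ (-1 - γ) * z ^ q) := by rw [hC]; ring
      _ = C * z ^ (q - γ - 1) := by rw [hzz]
  rw [← Set.Ioc_union_Ioi_eq_Ioi (by norm_num : (0:ℝ) ≤ 2)]
  exact part1.union part2
end

section
/- Let 0 < q < γ < 1 and suppose sup_{x≥0} |ω(x)|(1+x)^{-q} = ‖ω‖_q < ∞ for an odd function ω. Then the velocity u[ω](x) = -∫₀^∞ K(x,y)ω(y) dy satisfies sup_{x≥0} |u[ω](x)|(1+x)^{-(1-γ+q)} ≤ C‖ω‖_q for a constant C depending only on γ and q. -/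
open Real MeasureTheory Set

/-!
Estimate `|u[ω](x)| ≤ ∫₀^∞ |K(x,y)| |ω(y)| dy` on two ranges. On `(0, 2x]` one has
`0 ≤ K(x,y) ≤ |y - x|^(-γ)`, an integrable singularity of mass `2 x^(1-γ) / (1-γ)`, while
`|ω| ≤ M (1 + 2x)^q`. On `(2x, ∞)` the two terms of `K` nearly cancel: by Bernoulli's inequality
`K(x,y) ≤ 2γx (y - x)^(-γ-1) ≤ 2^(γ+2) γ x y^(-γ-1)`, and with `(1 + y)^q ≤ 1 + y^q` the tail is
`O(M (x^(1-γ) + x^(1-γ+q)))`, finite because `q < γ`. Both ranges give `O(M (1 + x)^(1-γ+q))`.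
-/

lemma one_sub_mul_le_one_add_rpow_neg {γ s : ℝ} (hγ0 : 0 ≤ γ) (hγ1 : γ ≤ 1) (hs : -1 < s) :
    1 - γ * s ≤ (1 + s) ^ (-γ) := by
  have hs1 : 0 < 1 + s := by linarith
  rcases le_or_gt (1 - γ * s) 0 with h | h
  · exact h.trans (rpow_nonneg hs1.le _)
  rw [rpow_neg hs1.le, le_inv_comm₀ h (rpow_pos_of_pos hs1 _), ← one_div,
    le_div_iff₀ h]
  calc (1 + s) ^ γ * (1 - γ * s) ≤ (1 + γ * s) * (1 - γ * s) :=
        mul_le_mul_of_nonneg_right (rpow_one_add_le_one_add_mul_self hs.le hγ0 hγ1) h.le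
    _ ≤ 1 := by nlinarith [sq_nonneg (γ * s)]

lemma rpow_neg_sub_rpow_neg_add_le {γ a d : ℝ} (hγ0 : 0 ≤ γ) (hγ1 : γ ≤ 1) (ha : 0 < a)
    (hd : -a < d) : a ^ (-γ) - (a + d) ^ (-γ) ≤ γ * d * a ^ (-γ - 1) := by
  have hda : -1 < d / a := by rw [lt_div_iff₀ ha]; linarith
  have hsplit : (a + d) ^ (-γ) = a ^ (-γ) * (1 + d / a) ^ (-γ) := by
    rw [← mul_rpow ha.le (by linarith), mul_one_add, mul_div_cancel₀ _ ha.ne']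
  have hpow : a ^ (-γ - 1) = a ^ (-γ) / a := by rw [rpow_sub_one ha.ne']
  rw [hsplit, hpow]
  have hbern := mul_le_mul_of_nonneg_left (one_sub_mul_le_one_add_rpow_neg hγ0 hγ1 hda)
    (rpow_nonneg ha.le (-γ))
  have hexpand : a ^ (-γ) * (1 - γ * (d / a)) = a ^ (-γ) - γ * d * (a ^ (-γ) / a) := by ring
  linarith

noncomputable def kernel (γ x y : ℝ) : ℝ := 1 / |y - x| ^ γ - 1 / |x + y| ^ γ

lemma abs_kernel_le {γ x y : ℝ} (hγ : 0 ≤ γ) (hx : 0 ≤ x) (hy : 0 ≤ y) (hne : y ≠ x) :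
    |kernel γ x y| ≤ |y - x| ^ (-γ) := by
  have hpos : 0 < |y - x| ^ γ := rpow_pos_of_pos (abs_pos.2 (sub_ne_zero.2 hne)) _
  have hdist : |y - x| ≤ |x + y| := by
    rw [abs_of_nonneg (by linarith : 0 ≤ x + y)]
    exact abs_sub_le_iff.2 ⟨by linarith, by linarith⟩
  have hle : |y - x| ^ γ ≤ |x + y| ^ γ := rpow_le_rpow (abs_nonneg _) hdist hγ
  have hmono : 1 / |x + y| ^ γ ≤ 1 / |y - x| ^ γ := one_div_le_one_div_of_le hpos hle
  rw [kernel, abs_of_nonneg (sub_nonneg.2 hmono), rpow_neg (abs_nonneg _), inv_eq_one_div]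
  linarith [one_div_pos.2 (hpos.trans_le hle)]

lemma abs_kernel_le_of_two_mul_lt {γ x y : ℝ} (hγ0 : 0 ≤ γ) (hγ1 : γ ≤ 1) (hx : 0 ≤ x)
    (hxy : 2 * x < y) : |kernel γ x y| ≤ 2 ^ (γ + 2) * γ * x * y ^ (-γ - 1) := by
  have hy : 0 < y := by linarith
  have hyx : 0 < y - x := by linarith
  have hK : kernel γ x y = (y - x) ^ (-γ) - (y - x + 2 * x) ^ (-γ) := by
    rw [kernel, abs_of_pos hyx, abs_of_pos (by linarith : 0 < x + y), rpow_neg hyx.le,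
      show y - x + 2 * x = x + y by ring, rpow_neg (by linarith : 0 ≤ x + y), inv_eq_one_div,
      inv_eq_one_div]
  have hnonneg : 0 ≤ kernel γ x y := by
    rw [hK, sub_nonneg]
    exact rpow_le_rpow_of_nonpos hyx (by linarith) (by linarith)
  have hhalf : (y - x) ^ (-γ - 1) ≤ 2 ^ (γ + 1) * y ^ (-γ - 1) := by
    calc (y - x) ^ (-γ - 1) ≤ (y / 2) ^ (-γ - 1) :=
          rpow_le_rpow_of_nonpos (by positivity) (by linarith) (by linarith)
      _ = 2 ^ (γ + 1) * y ^ (-γ - 1) := by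
          rw [div_rpow hy.le zero_le_two, show -γ - 1 = -(γ + 1) by ring,
            rpow_neg zero_le_two, div_inv_eq_mul]
          ring
  rw [abs_of_nonneg hnonneg]
  calc kernel γ x y ≤ γ * (2 * x) * (y - x) ^ (-γ - 1) :=
        hK ▸ rpow_neg_sub_rpow_neg_add_le hγ0 hγ1 hyx (by linarith)
    _ ≤ γ * (2 * x) * (2 ^ (γ + 1) * y ^ (-γ - 1)) := by gcongr
    _ = 2 ^ (γ + 2) * γ * x * y ^ (-γ - 1) := by
        rw [rpow_add zero_lt_two, rpow_add zero_lt_two]; norm_num; ring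

lemma intervalIntegrable_abs_rpow {p : ℝ} (hp : -1 < p) (a b : ℝ) :
    IntervalIntegrable (fun t : ℝ => |t| ^ p) volume a b := by
  have hpos : ∀ r, 0 ≤ r → IntervalIntegrable (fun t : ℝ => |t| ^ p) volume 0 r := fun r hr =>
    (intervalIntegral.intervalIntegrable_rpow' hp).congr fun t ht => by
      rw [uIoc_of_le hr] at ht
      rw [abs_of_pos ht.1]
  have hzero : ∀ b, IntervalIntegrable (fun t : ℝ => |t| ^ p) volume 0 b := by
    intro b
    rcases le_total 0 b with hb | hb
    · exact hpos b hb
    · have h := hpos (-b) (neg_nonneg.2 hb)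
      rw [IntervalIntegrable.iff_comp_neg] at h
      simpa only [abs_neg, neg_neg, neg_zero] using h
  exact (hzero a).symm.trans (hzero b)

lemma integral_abs_rpow {p : ℝ} (hp : -1 < p) {r : ℝ} (hr : 0 ≤ r) :
    ∫ t in (-r)..r, |t| ^ p = 2 * r ^ (p + 1) / (p + 1) := by
  have hpos : ∫ t in (0 : ℝ)..r, |t| ^ p = r ^ (p + 1) / (p + 1) := by
    rw [intervalIntegral.integral_congr (g := fun t => t ^ p) fun t ht => by
        rw [uIcc_of_le hr] at ht; simp only [abs_of_nonneg ht.1],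
      integral_rpow (Or.inl hp), zero_rpow (by linarith), sub_zero]
  have hneg : ∫ t in (-r)..0, |t| ^ p = ∫ t in (0 : ℝ)..r, |t| ^ p := by
    simpa only [abs_neg, neg_zero] using
      (intervalIntegral.integral_comp_neg (a := 0) (b := r) fun t => |t| ^ p).symm
  rw [← intervalIntegral.integral_add_adjacent_intervals (intervalIntegrable_abs_rpow hp _ _)
    (intervalIntegrable_abs_rpow hp _ _), hneg, hpos]
  ring

lemma intervalIntegrable_abs_sub_rpow {p : ℝ} (hp : -1 < p) (c a b : ℝ) :
    IntervalIntegrable (fun y : ℝ => |y - c| ^ p) volume a b := by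
  simpa only [sub_add_cancel] using
    (intervalIntegrable_abs_rpow hp (a - c) (b - c)).comp_sub_right c

lemma integral_abs_sub_rpow {p : ℝ} (hp : -1 < p) (c : ℝ) {r : ℝ} (hr : 0 ≤ r) :
    ∫ y in (c - r)..(c + r), |y - c| ^ p = 2 * r ^ (p + 1) / (p + 1) := by
  rw [intervalIntegral.integral_comp_sub_right (fun t => |t| ^ p), sub_sub_cancel_left,
    add_sub_cancel_left, integral_abs_rpow hp hr]

lemma rpow_le_one_add_rpow {x a b : ℝ} (hx : 0 ≤ x) (ha : 0 ≤ a) (hab : a ≤ b) :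
    x ^ a ≤ (1 + x) ^ b :=
  (rpow_le_rpow hx (by linarith) ha).trans (rpow_le_rpow_of_exponent_le (by linarith) hab)

section Velocity

variable {γ q M x : ℝ} {ω : ℝ → ℝ}

lemma nonneg_of_abs_le_mul_one_add_rpow (hω : ∀ y, 0 ≤ y → |ω y| ≤ M * (1 + y) ^ q) :
    0 ≤ M := by
  simpa using (abs_nonneg _).trans (hω 0 le_rfl)

lemma integral_Ioc_abs_kernel_mul_le (hγ0 : 0 ≤ γ) (hγ1 : γ < 1) (hq : 0 ≤ q) (hx : 0 ≤ x)
    (hω : ∀ y, 0 ≤ y → |ω y| ≤ M * (1 + y) ^ q) :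
    ∫ y in Ioc 0 (2 * x), |kernel γ x y * ω y|
      ≤ 2 ^ (q + 1) / (1 - γ) * M * (1 + x) ^ (1 - γ + q) := by
  have hM := nonneg_of_abs_le_mul_one_add_rpow hω
  have hp : -1 < -γ := by linarith
  have hIoc : Ioc 0 (2 * x) = Ioc (x - x) (x + x) := by rw [sub_self, two_mul]
  have hmajorant : IntegrableOn (fun y => |y - x| ^ (-γ)) (Ioc 0 (2 * x)) := by
    rw [hIoc]
    exact (intervalIntegrable_abs_sub_rpow hp x _ _).1
  have hbound : ∀ᵐ y ∂volume.restrict (Ioc 0 (2 * x)),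
      |kernel γ x y * ω y| ≤ |y - x| ^ (-γ) * (M * (1 + 2 * x) ^ q) := by
    -- the bound fails on the diagonal, where `1 / 0 = 0`; it is a null set
    have hne : ∀ᵐ y ∂volume.restrict (Ioc 0 (2 * x)), y ≠ x :=
      ae_restrict_of_ae (by simp [ae_iff, measure_singleton])
    filter_upwards [ae_restrict_mem measurableSet_Ioc, hne] with y hy hyx
    rw [abs_mul]
    exact mul_le_mul (abs_kernel_le hγ0 hx hy.1.le hyx)
      ((hω y hy.1.le).trans (by gcongr <;> linarith [hy.1, hy.2])) (abs_nonneg _) (by positivity)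
  have hgrowth : x ^ (1 - γ) * (1 + 2 * x) ^ q ≤ 2 ^ q * (1 + x) ^ (1 - γ + q) := by
    calc x ^ (1 - γ) * (1 + 2 * x) ^ q ≤ (1 + x) ^ (1 - γ) * (2 * (1 + x)) ^ q := by
          gcongr <;> linarith
      _ = 2 ^ q * (1 + x) ^ (1 - γ + q) := by
          rw [mul_rpow zero_le_two (by linarith), rpow_add (by linarith)]
          ring
  calc ∫ y in Ioc 0 (2 * x), |kernel γ x y * ω y|
      ≤ ∫ y in Ioc 0 (2 * x), |y - x| ^ (-γ) * (M * (1 + 2 * x) ^ q) :=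
        integral_mono_of_nonneg (ae_of_all _ fun _ => abs_nonneg _)
          (hmajorant.mul_const _) hbound
    _ = 2 * x ^ (1 - γ) / (1 - γ) * (M * (1 + 2 * x) ^ q) := by
        rw [integral_mul_const, hIoc, ← intervalIntegral.integral_of_le (by linarith),
          integral_abs_sub_rpow hp x hx, neg_add_eq_sub]
    _ = 2 * M * (x ^ (1 - γ) * (1 + 2 * x) ^ q) / (1 - γ) := by ring
    _ ≤ 2 * M * (2 ^ q * (1 + x) ^ (1 - γ + q)) / (1 - γ) :=
        div_le_div_of_nonneg_right (mul_le_mul_of_nonneg_left hgrowth (by positivity))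
          (by linarith)
    _ = 2 ^ (q + 1) / (1 - γ) * M * (1 + x) ^ (1 - γ + q) := by
        rw [rpow_add_one two_ne_zero]
        ring

lemma integral_Ioi_abs_kernel_mul_le (hγ0 : 0 < γ) (hγ1 : γ ≤ 1) (hq : 0 ≤ q) (hqγ : q < γ)
    (hx : 0 < x) (hω : ∀ y, 0 ≤ y → |ω y| ≤ M * (1 + y) ^ q) :
    ∫ y in Ioi (2 * x), |kernel γ x y * ω y|
      ≤ 2 ^ (γ + 2) * (1 + γ / (γ - q)) * M * (1 + x) ^ (1 - γ + q) := by
  have hM := nonneg_of_abs_le_mul_one_add_rpow hω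
  have h2x : 0 < 2 * x := by linarith
  have hexp₁ : -γ - 1 < -1 := by linarith
  have hexp₂ : q - γ - 1 < -1 := by linarith
  set c := 2 ^ (γ + 2) * γ * M * x with hc
  have hbound : ∀ y ∈ Ioi (2 * x),
      |kernel γ x y * ω y| ≤ c * (y ^ (-γ - 1) + y ^ (q - γ - 1)) := by
    intro y (hy : 2 * x < y)
    have hy0 : 0 < y := h2x.trans hy
    have hωy : |ω y| ≤ M * (1 + y ^ q) := by
      refine (hω y hy0.le).trans (mul_le_mul_of_nonneg_left ?_ hM)
      simpa using rpow_add_le_add_rpow zero_le_one hy0.le hq (by linarith)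
    calc |kernel γ x y * ω y|
        ≤ 2 ^ (γ + 2) * γ * x * y ^ (-γ - 1) * (M * (1 + y ^ q)) := by
          rw [abs_mul]
          exact mul_le_mul (abs_kernel_le_of_two_mul_lt hγ0.le hγ1 hx.le hy) hωy
            (abs_nonneg _) (by positivity)
      _ = c * (y ^ (-γ - 1) + y ^ (q - γ - 1)) := by
          rw [show q - γ - 1 = -γ - 1 + q by ring, rpow_add hy0, hc]
          ring
  have hdecay : ∀ s ≤ 0, 0 ≤ 1 + s → 1 + s ≤ 1 - γ + q →
      x * (2 * x) ^ s ≤ (1 + x) ^ (1 - γ + q) := by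
    intro s hs h₀ h₁
    calc x * (2 * x) ^ s ≤ x * x ^ s :=
          mul_le_mul_of_nonneg_left (rpow_le_rpow_of_nonpos hx (by linarith) hs) hx.le
      _ = x ^ (1 + s) := by rw [rpow_add hx, rpow_one]
      _ ≤ (1 + x) ^ (1 - γ + q) := rpow_le_one_add_rpow hx.le h₀ h₁
  calc ∫ y in Ioi (2 * x), |kernel γ x y * ω y|
      ≤ ∫ y in Ioi (2 * x), c * (y ^ (-γ - 1) + y ^ (q - γ - 1)) :=
        integral_mono_of_nonneg (ae_of_all _ fun _ => abs_nonneg _)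
          (((integrableOn_Ioi_rpow_of_lt hexp₁ h2x).add
            (integrableOn_Ioi_rpow_of_lt hexp₂ h2x)).const_mul c)
          ((ae_restrict_iff' measurableSet_Ioi).2 (ae_of_all _ hbound))
    _ = c * ((2 * x) ^ (-γ) / γ + (2 * x) ^ (q - γ) / (γ - q)) := by
        rw [integral_const_mul, integral_add (integrableOn_Ioi_rpow_of_lt hexp₁ h2x)
          (integrableOn_Ioi_rpow_of_lt hexp₂ h2x), integral_Ioi_rpow_of_lt hexp₁ h2x,
          integral_Ioi_rpow_of_lt hexp₂ h2x, show -γ - 1 + 1 = -γ by ring,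
          show q - γ - 1 + 1 = q - γ by ring, neg_div_neg_eq, neg_div, ← div_neg, neg_sub]
    _ = 2 ^ (γ + 2) * M * (x * (2 * x) ^ (-γ) + γ / (γ - q) * (x * (2 * x) ^ (q - γ))) := by
        rw [hc]
        field_simp
    _ ≤ 2 ^ (γ + 2) * M * ((1 + x) ^ (1 - γ + q) + γ / (γ - q) * (1 + x) ^ (1 - γ + q)) := by
        have hγq : 0 < γ - q := by linarith
        gcongr
        · exact hdecay _ (by linarith) (by linarith) (by linarith)
        · exact hdecay _ (by linarith) (by linarith) (by linarith)
    _ = 2 ^ (γ + 2) * (1 + γ / (γ - q)) * M * (1 + x) ^ (1 - γ + q) := by ring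

lemma abs_integral_kernel_mul_le (hγ0 : 0 < γ) (hγ1 : γ < 1) (hq : 0 ≤ q) (hqγ : q < γ)
    (hx : 0 < x) (hω : ∀ y, 0 ≤ y → |ω y| ≤ M * (1 + y) ^ q)
    (hint : IntegrableOn (fun y => kernel γ x y * ω y) (Ioi 0)) :
    |∫ y in Ioi 0, kernel γ x y * ω y|
      ≤ (2 ^ (q + 1) / (1 - γ) + 2 ^ (γ + 2) * (1 + γ / (γ - q))) * M * (1 + x) ^ (1 - γ + q) := by
  have hsplit : Ioc 0 (2 * x) ∪ Ioi (2 * x) = Ioi 0 := Ioc_union_Ioi_eq_Ioi (by linarith)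
  have habs : IntegrableOn (fun y => |kernel γ x y * ω y|) (Ioc 0 (2 * x) ∪ Ioi (2 * x)) :=
    hsplit ▸ hint.abs
  calc |∫ y in Ioi 0, kernel γ x y * ω y|
      ≤ ∫ y in Ioi 0, |kernel γ x y * ω y| := abs_integral_le_integral_abs
    _ = (∫ y in Ioc 0 (2 * x), |kernel γ x y * ω y|)
          + ∫ y in Ioi (2 * x), |kernel γ x y * ω y| := by
        rw [← hsplit, setIntegral_union Ioc_disjoint_Ioi_same measurableSet_Ioi
          (habs.mono_set subset_union_left) (habs.mono_set subset_union_right)]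
    _ ≤ 2 ^ (q + 1) / (1 - γ) * M * (1 + x) ^ (1 - γ + q)
          + 2 ^ (γ + 2) * (1 + γ / (γ - q)) * M * (1 + x) ^ (1 - γ + q) :=
        add_le_add (integral_Ioc_abs_kernel_mul_le hγ0.le hγ1 hq hx.le hω)
          (integral_Ioi_abs_kernel_mul_le hγ0 hγ1.le hq hqγ hx hω)
    _ = _ := by ring

end Velocity

theorem velocity_norm_estimate (γ q : ℝ) (hγ : 0 < γ) (hγ1 : γ < 1)
    (hq : 0 < q) (hqγ : q < γ) :
    ∃ C > 0, ∀ (ω : ℝ → ℝ) (M : ℝ), Measurable ω →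
      (∀ x, ω (-x) = -ω x) →
      (∀ x, 0 ≤ x → |ω x| ≤ M * (1 + x) ^ q) →
      (∀ x > (0:ℝ), IntegrableOn
        (fun y => (1 / |y - x| ^ γ - 1 / |x + y| ^ γ) * ω y) (Set.Ioi (0 : ℝ))) →
      ∀ x, 0 ≤ x →
        |-(∫ y in Set.Ioi (0 : ℝ), (1 / |y - x| ^ γ - 1 / |x + y| ^ γ) * ω y)|
          ≤ C * M * (1 + x) ^ (1 - γ + q) := by
  have h1γ : 0 < 1 - γ := sub_pos.2 hγ1
  have hγq : 0 < γ - q := sub_pos.2 hqγ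
  have hC : 0 < 2 ^ (q + 1) / (1 - γ) + 2 ^ (γ + 2) * (1 + γ / (γ - q)) := by positivity
  refine ⟨_, hC, fun ω M _ _ hω hint x hx => ?_⟩
  rw [abs_neg]
  rcases hx.eq_or_lt with rfl | hx
  · simp only [sub_zero, zero_add, sub_self, zero_mul, integral_zero, abs_zero]
    exact mul_nonneg (mul_nonneg hC.le (nonneg_of_abs_le_mul_one_add_rpow hω)) (by positivity)
  · exact abs_integral_kernel_mul_le hγ hγ1 hq.le hqγ hx hω (hint x hx)
end

section
/- Let 0 < p < γ < 1 and f(z) = (z+1)^p - 1. Then U(z) = ∫₀^∞ (|y-z|^{-γ} - |y+z|^{-γ}) f(y) dy is well-defined (the integral converges absolutely after grouping) and U(z) > 0 for every z > 0. -/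
open Real MeasureTheory Set

private lemma rpow_inv_diff_le {γ a b : ℝ} (hγ0 : 0 < γ) (hγ1 : γ ≤ 1) (ha : 0 < a)
    (hab : a ≤ b) : (a ^ γ)⁻¹ - (b ^ γ)⁻¹ ≤ γ * (b - a) / (a * a ^ γ) := by
  have hb : 0 < b := ha.trans_le hab
  have hA : 0 < a ^ γ := Real.rpow_pos_of_pos ha γ
  have hB : 0 < b ^ γ := Real.rpow_pos_of_pos hb γ
  have hAB : a ^ γ ≤ b ^ γ := Real.rpow_le_rpow ha.le hab hγ0.le
  have hs : (-1 : ℝ) ≤ (b - a) / a := by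
    have h0 : (0:ℝ) ≤ (b - a) / a := div_nonneg (by linarith) ha.le
    linarith
  have h1 : (1 + (b - a) / a) ^ γ ≤ 1 + γ * ((b - a) / a) :=
    rpow_one_add_le_one_add_mul_self hs hγ0.le hγ1
  have h2 : (1 : ℝ) + (b - a) / a = b / a := by field_simp; ring
  rw [h2, Real.div_rpow hb.le ha.le] at h1
  -- h1 : b ^ γ / a ^ γ ≤ 1 + γ * ((b - a) / a)
  rw [div_le_iff₀ hA] at h1
  have hγba : 0 ≤ γ * (b - a) := mul_nonneg hγ0.le (by linarith)
  have e : (a ^ γ)⁻¹ - (b ^ γ)⁻¹ = (b ^ γ - a ^ γ) / (a ^ γ * b ^ γ) := by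
    field_simp
  rw [e, div_le_div_iff₀ (by positivity) (by positivity)]
  have h3 : a * (b ^ γ - a ^ γ) ≤ γ * (b - a) * a ^ γ := by
    have h5 := mul_le_mul_of_nonneg_left h1 ha.le
    have h4 : a * ((1 + γ * ((b - a) / a)) * a ^ γ) = a * a ^ γ + γ * (b - a) * a ^ γ := by
      field_simp
    rw [h4] at h5
    linarith
  calc (b ^ γ - a ^ γ) * (a * a ^ γ) = (a * (b ^ γ - a ^ γ)) * a ^ γ := by ring
    _ ≤ (γ * (b - a) * a ^ γ) * a ^ γ := by
        apply mul_le_mul_of_nonneg_right h3 hA.le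
    _ ≤ γ * (b - a) * (a ^ γ * b ^ γ) := by nlinarith [mul_le_mul_of_nonneg_left hAB (mul_nonneg hγba hA.le)]

private lemma rpow_add_one_le {p y : ℝ} (hp : 0 ≤ p) (hp1 : p ≤ 1) (hy : 0 ≤ y) :
    (y + 1) ^ p ≤ y ^ p + 1 := by
  have h := NNReal.rpow_add_le_add_rpow (y.toNNReal) 1 hp hp1
  have h2 := NNReal.coe_le_coe.2 h
  simp only [NNReal.coe_add, NNReal.coe_rpow, NNReal.coe_one, NNReal.one_rpow,
    Real.coe_toNNReal y hy, NNReal.rpow_one] at h2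
  convert h2 using 2

theorem U_welldefined_positive (γ p : ℝ) (hp : 0 < p) (hpγ : p < γ) (hγ1 : γ < 1)
    (z : ℝ) (hz : 0 < z) :
    IntegrableOn
      (fun y => (1 / |y - z| ^ γ - 1 / |y + z| ^ γ) * ((y + 1) ^ p - 1))
      (Set.Ioi (0 : ℝ)) ∧
    0 < ∫ y in Set.Ioi (0 : ℝ),
      (1 / |y - z| ^ γ - 1 / |y + z| ^ γ) * ((y + 1) ^ p - 1) := by
  have hγ0 : 0 < γ := hp.trans hpγ
  set g : ℝ → ℝ := fun y => (1 / |y - z| ^ γ - 1 / |y + z| ^ γ) * ((y + 1) ^ p - 1) with hg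
  -- measurability
  have hm : Measurable g := by
    have c1 : Continuous fun y : ℝ => |y - z| ^ γ :=
      ((continuous_id.sub continuous_const).abs).rpow_const (fun x => Or.inr hγ0.le)
    have c2 : Continuous fun y : ℝ => |y + z| ^ γ :=
      ((continuous_id.add continuous_const).abs).rpow_const (fun x => Or.inr hγ0.le)
    have c3 : Continuous fun y : ℝ => (y + 1) ^ p - 1 :=
      ((continuous_id.add continuous_const).rpow_const (fun x => Or.inr hp.le)).sub
        continuous_const
    simp only [hg, one_div]
    exact ((c1.measurable.inv.sub c2.measurable.inv).mul c3.measurable)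
  -- nonnegativity of the second factor
  have hF0 : ∀ y : ℝ, 0 ≤ y → 0 ≤ (y + 1) ^ p - 1 := by
    intro y hy
    have : (1 : ℝ) = 1 ^ p := (Real.one_rpow p).symm
    rw [sub_nonneg, this]
    exact Real.rpow_le_rpow (by norm_num) (by linarith) hp.le
  -- integrability on (0, 2z]
  have I1 : IntegrableOn g (Set.Ioc 0 (2 * z)) := by
    have hb1 : IntegrableOn (fun y => |y - z| ^ (-γ)) (Set.Ioc 0 (2 * z)) := by
      have base : ∀ a b : ℝ, IntervalIntegrable (fun x : ℝ => x ^ (-γ)) volume a b :=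
        fun a b => intervalIntegral.intervalIntegrable_rpow' (by linarith)
      have left : IntegrableOn (fun y => |y - z| ^ (-γ)) (Set.Ioc 0 z) := by
        have h := ((base 0 z).comp_sub_left z).symm
        simp only [sub_zero, sub_self] at h
        rw [intervalIntegrable_iff_integrableOn_Ioc_of_le hz.le] at h
        refine h.congr_fun (fun y hy => ?_) measurableSet_Ioc
        rw [abs_of_nonpos (by simp at hy; linarith [hy.2]), neg_sub]
      have right : IntegrableOn (fun y => |y - z| ^ (-γ)) (Set.Ioc z (2 * z)) := by
        have h := (base 0 z).comp_sub_right z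
        simp only [zero_add] at h
        have hzz : z + z = 2 * z := by ring
        rw [hzz, intervalIntegrable_iff_integrableOn_Ioc_of_le (by linarith)] at h
        refine h.congr_fun (fun y hy => ?_) measurableSet_Ioc
        rw [abs_of_nonneg (by simp at hy; linarith [hy.1])]
      have : Set.Ioc (0:ℝ) (2*z) = Set.Ioc 0 z ∪ Set.Ioc z (2*z) :=
        (Set.Ioc_union_Ioc_eq_Ioc hz.le (by linarith)).symm
      rw [this]
      exact left.union right
    have hb2 : IntegrableOn (fun _ : ℝ => z ^ (-γ)) (Set.Ioc 0 (2 * z)) :=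
      integrableOn_const measure_Ioc_lt_top.ne
    refine Integrable.mono' (((hb1.add hb2).const_mul ((2*z + 1) ^ p - 1)))
      hm.aestronglyMeasurable.restrict ?_
    filter_upwards [ae_restrict_mem measurableSet_Ioc] with y hy
    obtain ⟨hy0, hy2⟩ := hy
    have hyz : 0 < y + z := by linarith
    have hA : 1 / |y - z| ^ γ = |y - z| ^ (-γ) := by
      rw [Real.rpow_neg (abs_nonneg _), one_div]
    have hB : 1 / |y + z| ^ γ ≤ z ^ (-γ) := by
      rw [abs_of_pos hyz, Real.rpow_neg hz.le, one_div]
      apply inv_anti₀ (Real.rpow_pos_of_pos hz γ)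
      exact Real.rpow_le_rpow hz.le (by linarith) hγ0.le
    have hBnn : 0 ≤ 1 / |y + z| ^ γ := by positivity
    have hAnn : 0 ≤ 1 / |y - z| ^ γ := by positivity
    have hFle : (y + 1) ^ p - 1 ≤ (2*z + 1) ^ p - 1 := by
      have := Real.rpow_le_rpow (by linarith) (by linarith : y + 1 ≤ 2*z + 1) hp.le
      linarith
    have hFnn := hF0 y hy0.le
    rw [Real.norm_eq_abs, abs_mul, abs_of_nonneg hFnn]
    calc |1 / |y - z| ^ γ - 1 / |y + z| ^ γ| * ((y + 1) ^ p - 1)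
        ≤ (1 / |y - z| ^ γ + 1 / |y + z| ^ γ) * ((y + 1) ^ p - 1) := by
          apply mul_le_mul_of_nonneg_right _ hFnn
          calc |1 / |y - z| ^ γ - 1 / |y + z| ^ γ|
              ≤ |1 / |y - z| ^ γ| + |1 / |y + z| ^ γ| := abs_sub _ _
            _ = 1 / |y - z| ^ γ + 1 / |y + z| ^ γ := by
                rw [abs_of_nonneg hAnn, abs_of_nonneg hBnn]
      _ ≤ (|y - z| ^ (-γ) + z ^ (-γ)) * ((2*z+1) ^ p - 1) := by
          refine mul_le_mul ?_ hFle hFnn ?_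
          · rw [hA]
            exact add_le_add le_rfl hB
          · have h1 : (0:ℝ) ≤ |y - z| ^ (-γ) := Real.rpow_nonneg (abs_nonneg _) _
            have h2 : (0:ℝ) ≤ z ^ (-γ) := Real.rpow_nonneg hz.le _
            linarith
      _ = ((2*z+1) ^ p - 1) * (|y - z| ^ (-γ) + z ^ (-γ)) := by ring
  -- integrability on (2z, ∞)
  have I2 : IntegrableOn g (Set.Ioi (2 * z)) := by
    set C : ℝ := γ * (2 * z) * 2 ^ (1 + γ) with hC
    have hbound : IntegrableOn (fun y => C * y ^ (p - γ - 1)) (Set.Ioi (2 * z)) :=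
      (integrableOn_Ioi_rpow_of_lt (by linarith) (by linarith)).const_mul C
    refine Integrable.mono' hbound hm.aestronglyMeasurable.restrict ?_
    filter_upwards [ae_restrict_mem measurableSet_Ioi] with y hy
    rw [Set.mem_Ioi] at hy
    have hy0 : 0 < y := by linarith
    have hyz : 0 < y - z := by linarith
    have hyz2 : y / 2 ≤ y - z := by linarith
    have hy2 : 0 < y / 2 := by linarith
    have habs1 : |y - z| = y - z := abs_of_pos hyz
    have habs2 : |y + z| = y + z := abs_of_pos (by linarith)
    have hA : 1 / |y - z| ^ γ = ((y - z) ^ γ)⁻¹ := by rw [habs1, one_div]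
    have hB : 1 / |y + z| ^ γ = ((y + z) ^ γ)⁻¹ := by rw [habs2, one_div]
    have hdiff : ((y - z) ^ γ)⁻¹ - ((y + z) ^ γ)⁻¹ ≤ γ * (2 * z) / ((y - z) * (y - z) ^ γ) := by
      have := rpow_inv_diff_le hγ0 hγ1.le hyz (by linarith : y - z ≤ y + z)
      have he : y + z - (y - z) = 2 * z := by ring
      rw [he] at this
      exact this
    have hdnn : 0 ≤ ((y - z) ^ γ)⁻¹ - ((y + z) ^ γ)⁻¹ := by
      rw [sub_nonneg]
      apply inv_anti₀ (Real.rpow_pos_of_pos hyz γ)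
      exact Real.rpow_le_rpow hyz.le (by linarith) hγ0.le
    have hFnn := hF0 y hy0.le
    have hFle : (y + 1) ^ p - 1 ≤ y ^ p := by
      have := rpow_add_one_le hp.le (by linarith : p ≤ 1) hy0.le
      linarith
    have hstep : γ * (2 * z) / ((y - z) * (y - z) ^ γ) ≤ C * y ^ (-(1 + γ)) := by
      have h1 : (y / 2) * (y / 2) ^ γ ≤ (y - z) * (y - z) ^ γ :=
        mul_le_mul hyz2 (Real.rpow_le_rpow hy2.le hyz2 hγ0.le)
          (Real.rpow_nonneg hy2.le γ) hyz.le
      have h2 : γ * (2 * z) / ((y - z) * (y - z) ^ γ) ≤ γ * (2 * z) / ((y / 2) * (y / 2) ^ γ) := by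
        apply div_le_div_of_nonneg_left (by positivity) (by positivity) h1
      refine h2.trans (le_of_eq ?_)
      have e1 : (y / 2) * (y / 2) ^ γ = (y / 2) ^ (1 + γ) := by
        rw [Real.rpow_add hy2, Real.rpow_one]
      have e2 : (y / 2) ^ (1 + γ) = y ^ (1 + γ) / 2 ^ (1 + γ) := by
        rw [Real.div_rpow hy0.le (by norm_num : (0:ℝ) ≤ 2)]
      rw [e1, e2, hC, Real.rpow_neg hy0.le]
      have hy1γ : (0:ℝ) < y ^ (1 + γ) := Real.rpow_pos_of_pos hy0 _
      have h2γ : (0:ℝ) < 2 ^ (1 + γ) := Real.rpow_pos_of_pos (by norm_num) _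
      field_simp
    rw [Real.norm_eq_abs, abs_mul]
    simp only [hA, hB]
    rw [abs_of_nonneg hdnn, abs_of_nonneg hFnn]
    calc (((y - z) ^ γ)⁻¹ - ((y + z) ^ γ)⁻¹) * ((y + 1) ^ p - 1)
        ≤ (C * y ^ (-(1 + γ))) * y ^ p := by
          apply mul_le_mul (hdiff.trans hstep) hFle hFnn
          positivity
      _ = C * y ^ (p - γ - 1) := by
          rw [mul_assoc, ← Real.rpow_add hy0]
          ring_nf
  have hunion : Set.Ioi (0:ℝ) = Set.Ioc 0 (2*z) ∪ Set.Ioi (2*z) :=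
    (Set.Ioc_union_Ioi_eq_Ioi (by linarith)).symm
  have hint : IntegrableOn g (Set.Ioi (0:ℝ)) := by
    rw [hunion]; exact I1.union I2
  refine ⟨hint, ?_⟩
  -- positivity
  have hgpos : ∀ y : ℝ, 0 < y → y ≠ z → 0 < g y := by
    intro y hy0 hyz
    have habs : |y - z| < y + z := abs_lt.2 ⟨by linarith, by linarith⟩
    have habs0 : 0 < |y - z| := abs_pos.2 (sub_ne_zero.2 hyz)
    have h1 : |y - z| ^ γ < |y + z| ^ γ := by
      rw [abs_of_pos (by linarith : 0 < y + z)]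
      exact Real.rpow_lt_rpow (abs_nonneg _) habs hγ0
    have h2 : 1 / |y + z| ^ γ < 1 / |y - z| ^ γ :=
      one_div_lt_one_div_of_lt (Real.rpow_pos_of_pos habs0 γ) h1
    have h3 : (1:ℝ) < (y + 1) ^ p := by
      have : (1:ℝ) = 1 ^ p := (Real.one_rpow p).symm
      rw [this]
      exact Real.rpow_lt_rpow (by norm_num) (by linarith) hp
    exact mul_pos (by linarith) (by linarith)
  have hae : 0 ≤ᵐ[volume.restrict (Set.Ioi (0:ℝ))] g := by
    have hne : ∀ᵐ y : ℝ ∂volume, y ≠ z := by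
      rw [ae_iff]
      have : {y : ℝ | ¬ y ≠ z} = {z} := by ext y; simp
      rw [this]
      exact measure_singleton z
    filter_upwards [ae_restrict_mem measurableSet_Ioi, ae_restrict_of_ae hne] with y hy hyne
    exact (hgpos y hy hyne).le
  rw [hg] at hint ⊢
  refine (setIntegral_pos_iff_support_of_nonneg_ae hae hint).2 ?_
  have hsub : Set.Ioo 0 z ⊆ Function.support g ∩ Set.Ioi 0 := by
    intro y hy
    exact ⟨(hgpos y hy.1 (ne_of_lt hy.2)).ne', hy.1⟩
  calc (0:ENNReal) < volume (Set.Ioo 0 z) := by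
        rw [Real.volume_Ioo]; simp [hz]
    _ ≤ volume (Function.support g ∩ Set.Ioi 0) := measure_mono hsub
end

section
/- With f(z) = (z+1)^p - 1, 0 < p < γ < 1, and U as above, U'(0) = 2∫₀^∞ y^{-γ} f'(y) dy, and this quantity is strictly positive and finite. -/
open Real MeasureTheory

section UDerivAux
open Set Filter Topology

variable {γ p : ℝ}

/-- `f y ≥ 0`. -/
lemma Uda_f_nonneg (hp : 0 ≤ p) {y : ℝ} (hy : 0 ≤ y) : 0 ≤ (y + 1) ^ p - 1 := by
  have h := Real.rpow_le_rpow zero_le_one (by linarith : (1:ℝ) ≤ y + 1) hp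
  rw [Real.one_rpow] at h; linarith

/-- Bernoulli: `f y ≤ p * y`. -/
lemma Uda_f_le (hp : 0 ≤ p) (hp1 : p ≤ 1) {y : ℝ} (hy : 0 ≤ y) :
    (y + 1) ^ p - 1 ≤ p * y := by
  have h := rpow_one_add_le_one_add_mul_self (s := y) (by linarith) hp hp1
  rw [add_comm 1 y] at h; linarith

/-- For `y ≥ 1`, `f y ≤ 2 y^p`. -/
lemma Uda_f_le' (hp : 0 ≤ p) (hp1 : p ≤ 1) {y : ℝ} (hy : 1 ≤ y) :
    (y + 1) ^ p - 1 ≤ 2 * y ^ p := by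
  have h2 : (y+1)^p ≤ (2*y)^p := Real.rpow_le_rpow (by linarith) (by linarith) hp
  have h3 : (2*y:ℝ)^p = 2^p * y^p := Real.mul_rpow (by norm_num) (by linarith)
  have h4 : (2:ℝ)^p ≤ 2^(1:ℝ) := Real.rpow_le_rpow_of_exponent_le one_le_two hp1
  have h5 : (0:ℝ) ≤ y^p := Real.rpow_nonneg (by linarith) p
  rw [Real.rpow_one] at h4
  nlinarith

lemma Uda_integrableOn_mono {f g : ℝ → ℝ} {s : Set ℝ} (hs : MeasurableSet s)
    (hg : IntegrableOn g s) (hf : AEStronglyMeasurable f (volume.restrict s))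
    (h : ∀ y ∈ s, |f y| ≤ g y) : IntegrableOn f s :=
  hg.mono' hf ((ae_restrict_iff' hs).2 (ae_of_all _ fun y hy => by
    simpa [Real.norm_eq_abs] using h y hy))

lemma Uda_integrableOn_Ioc_rpow {r : ℝ} (hr : -1 < r) {b : ℝ} (hb : 0 ≤ b) :
    IntegrableOn (fun t : ℝ => t ^ r) (Ioc 0 b) :=
  (intervalIntegrable_iff_integrableOn_Ioc_of_le hb).1
    (intervalIntegral.intervalIntegrable_rpow' hr)

/-- Integrability of `y^(-γ-1) * f y` on `(0,∞)`. -/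
lemma Uda_integrable_B (hp : 0 < p) (hpγ : p < γ) (hγ1 : γ < 1) :
    IntegrableOn (fun y => y ^ (-γ - 1) * ((y + 1) ^ p - 1)) (Ioi (0:ℝ)) := by
  have hγ0 : 0 < γ := hp.trans hpγ
  have hp1 : p ≤ 1 := by linarith
  rw [← Ioc_union_Ioi_eq_Ioi (zero_le_one)]
  apply IntegrableOn.union
  · apply Uda_integrableOn_mono measurableSet_Ioc
      ((Uda_integrableOn_Ioc_rpow (by linarith : (-1:ℝ) < -γ) zero_le_one).const_mul p)
    · exact (by fun_prop : Measurable fun y : ℝ => y ^ (-γ-1) * ((y+1)^p - 1)).aestronglyMeasurable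
    · intro y hy
      have hy0 : 0 < y := hy.1
      have h1 : (0:ℝ) ≤ y ^ (-γ-1) := Real.rpow_nonneg hy0.le _
      have h2 : 0 ≤ (y+1)^p - 1 := Uda_f_nonneg hp.le hy0.le
      rw [abs_of_nonneg (mul_nonneg h1 h2)]
      calc y ^ (-γ-1) * ((y+1)^p - 1) ≤ y ^ (-γ-1) * (p * y) :=
            mul_le_mul_of_nonneg_left (Uda_f_le hp.le hp1 hy0.le) h1
        _ = p * y ^ (-γ) := by
            rw [show (-γ : ℝ) = -γ-1+1 by ring, Real.rpow_add hy0, Real.rpow_one]; ring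
  · apply Uda_integrableOn_mono measurableSet_Ioi
      ((integrableOn_Ioi_rpow_of_lt (by linarith : p - γ - 1 < -1) one_pos).const_mul 2)
    · exact (by fun_prop : Measurable fun y : ℝ => y ^ (-γ-1) * ((y+1)^p - 1)).aestronglyMeasurable
    · intro y hy
      have hy1 : (1:ℝ) ≤ y := le_of_lt hy
      have hy0 : 0 < y := lt_of_lt_of_le one_pos hy1
      have h1 : (0:ℝ) ≤ y ^ (-γ-1) := Real.rpow_nonneg hy0.le _
      have h2 : 0 ≤ (y+1)^p - 1 := Uda_f_nonneg hp.le hy0.le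
      rw [abs_of_nonneg (mul_nonneg h1 h2)]
      calc y ^ (-γ-1) * ((y+1)^p - 1) ≤ y ^ (-γ-1) * (2 * y ^ p) :=
            mul_le_mul_of_nonneg_left (Uda_f_le' hp.le hp1 hy1) h1
        _ = 2 * y ^ (p - γ - 1) := by
            rw [show (p-γ-1 : ℝ) = -γ-1+p by ring, Real.rpow_add hy0]; ring

/-- Integrability of `y^(-γ) * (p (y+1)^(p-1))` on `(0,∞)`: first conjunct. -/
lemma Uda_integrable_A (hp : 0 < p) (hpγ : p < γ) (hγ1 : γ < 1) :
    IntegrableOn (fun y => y ^ (-γ) * (p * (y + 1) ^ (p - 1))) (Ioi (0:ℝ)) := by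
  have hγ0 : 0 < γ := hp.trans hpγ
  rw [← Ioc_union_Ioi_eq_Ioi (zero_le_one)]
  apply IntegrableOn.union
  · apply Uda_integrableOn_mono measurableSet_Ioc
      ((Uda_integrableOn_Ioc_rpow (by linarith : (-1:ℝ) < -γ) zero_le_one).const_mul p)
    · exact (by fun_prop : Measurable fun y : ℝ => y ^ (-γ) * (p * (y+1)^(p-1))).aestronglyMeasurable
    · intro y hy
      have hy0 : 0 < y := hy.1
      have h1 : (0:ℝ) ≤ y ^ (-γ) := Real.rpow_nonneg hy0.le _
      have h2 : (0:ℝ) ≤ (y+1)^(p-1) := Real.rpow_nonneg (by linarith) _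
      have h3 : (y+1:ℝ)^(p-1) ≤ 1 :=
        Real.rpow_le_one_of_one_le_of_nonpos (by linarith) (by linarith)
      rw [abs_of_nonneg (mul_nonneg h1 (mul_nonneg hp.le h2))]
      calc y ^ (-γ) * (p * (y+1)^(p-1)) ≤ y ^ (-γ) * (p * 1) :=
            mul_le_mul_of_nonneg_left (mul_le_mul_of_nonneg_left h3 hp.le) h1
        _ = p * y ^ (-γ) := by ring
  · apply Uda_integrableOn_mono measurableSet_Ioi
      ((integrableOn_Ioi_rpow_of_lt (by linarith : p - 1 - γ < -1) one_pos).const_mul p)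
    · exact (by fun_prop : Measurable fun y : ℝ => y ^ (-γ) * (p * (y+1)^(p-1))).aestronglyMeasurable
    · intro y hy
      have hy0 : (0:ℝ) < y := lt_trans one_pos hy
      have h1 : (0:ℝ) ≤ y ^ (-γ) := Real.rpow_nonneg hy0.le _
      have h2 : (0:ℝ) ≤ (y+1)^(p-1) := Real.rpow_nonneg (by linarith) _
      have h3 : (y+1:ℝ)^(p-1) ≤ y ^ (p-1) :=
        Real.rpow_le_rpow_of_nonpos hy0 (by linarith) (by linarith)
      rw [abs_of_nonneg (mul_nonneg h1 (mul_nonneg hp.le h2))]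
      calc y ^ (-γ) * (p * (y+1)^(p-1)) ≤ y ^ (-γ) * (p * y^(p-1)) :=
            mul_le_mul_of_nonneg_left (mul_le_mul_of_nonneg_left h3 hp.le) h1
        _ = p * y ^ (p-1-γ) := by
            rw [show (p-1-γ : ℝ) = -γ+(p-1) by ring, Real.rpow_add hy0]; ring

/-- Mean value inequality: for `0 < u ≤ v`, `u^(-γ) - v^(-γ) ≤ γ u^(-γ-1) (v-u)`. -/
lemma Uda_mvt (hγ0 : 0 < γ) {u v : ℝ} (hu : 0 < u) (huv : u ≤ v) :
    u ^ (-γ) - v ^ (-γ) ≤ γ * u ^ (-γ - 1) * (v - u) := by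
  rcases eq_or_lt_of_le huv with rfl | h
  · simp
  obtain ⟨c, hc, hceq⟩ := exists_hasDerivAt_eq_slope (fun t => t ^ (-γ))
    (fun t => -γ * t ^ (-γ - 1)) h
    (ContinuousOn.rpow_const continuousOn_id fun x hx =>
      Or.inl (ne_of_gt (lt_of_lt_of_le hu hx.1)))
    (fun x hx => by
      have := Real.hasDerivAt_rpow_const (x := x) (p := -γ)
        (Or.inl (ne_of_gt (hu.trans hx.1)))
      simpa [mul_comm] using this)
  have hcu : u < c := hc.1
  have hc0 : 0 < c := hu.trans hcu
  have heq : u ^ (-γ) - v ^ (-γ) = γ * c ^ (-γ - 1) * (v - u) := by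
    have hvu : v - u ≠ 0 := ne_of_gt (sub_pos.2 h)
    field_simp at hceq
    nlinarith [hceq]
  rw [heq]
  have h1 : c ^ (-γ - 1) ≤ u ^ (-γ - 1) :=
    Real.rpow_le_rpow_of_nonpos hu hcu.le (by linarith)
  have h2 : (0:ℝ) ≤ v - u := by linarith
  exact mul_le_mul_of_nonneg_right (mul_le_mul_of_nonneg_left h1 hγ0.le) h2

/-- Key kernel bound for `y > 2z > 0`. -/
lemma Uda_K_le (hγ0 : 0 < γ) (hγ1 : γ < 1) {y z : ℝ} (hz : 0 < z) (hy : 2*z < y) :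
    (y - z) ^ (-γ) - (y + z) ^ (-γ) ≤ (2:ℝ)^(γ+2) * γ * z * y ^ (-γ-1) := by
  have hu : 0 < y - z := by linarith
  have h1 : (y-z) ^ (-γ) - (y+z) ^ (-γ) ≤ γ * (y-z) ^ (-γ-1) * (2*z) := by
    have := Uda_mvt hγ0 hu (by linarith : y - z ≤ y + z)
    have e : y + z - (y - z) = 2*z := by ring
    rw [e] at this; exact this
  have h2 : (y-z) ^ (-γ-1) ≤ (y/2) ^ (-γ-1) :=
    Real.rpow_le_rpow_of_nonpos (by linarith) (by linarith) (by linarith)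
  have h3 : (y/2 : ℝ) ^ (-γ-1) = 2^(γ+1) * y ^ (-γ-1) := by
    rw [div_eq_mul_inv, Real.mul_rpow (by linarith) (by norm_num),
      Real.inv_rpow (by norm_num : (0:ℝ) ≤ 2), ← Real.rpow_neg (by norm_num : (0:ℝ) ≤ 2),
      show -(-γ-1) = γ+1 by ring]
    ring
  have h4 : (2:ℝ)^(γ+2) = 2 * 2^(γ+1) := by
    rw [show (γ+2 : ℝ) = 1 + (γ+1) by ring, Real.rpow_add two_pos, Real.rpow_one]
  have h5 : (0:ℝ) ≤ y ^ (-γ-1) := Real.rpow_nonneg (by linarith) _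
  calc (y-z) ^ (-γ) - (y+z) ^ (-γ) ≤ γ * (y-z) ^ (-γ-1) * (2*z) := h1
    _ ≤ γ * ((y/2) ^ (-γ-1)) * (2*z) :=
          mul_le_mul_of_nonneg_right (mul_le_mul_of_nonneg_left h2 hγ0.le) (by linarith)
    _ = (2:ℝ)^(γ+2) * γ * z * y ^ (-γ-1) := by rw [h3, h4]; ring

/-- Integrability of `|y - c|^(-γ)` on `Ioc 0 b` (where `0 ≤ c ≤ b`). -/
lemma Uda_integrable_absK (hγ0 : 0 < γ) (hγ1 : γ < 1) {c b : ℝ} (hc : 0 ≤ c) (hcb : c ≤ b) :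
    IntegrableOn (fun y : ℝ => |y - c| ^ (-γ)) (Ioc 0 b) := by
  have hr : (-1:ℝ) < -γ := by linarith
  rw [← Ioc_union_Ioc_eq_Ioc hc hcb]
  apply IntegrableOn.union
  · have h1 : IntervalIntegrable (fun x : ℝ => (c - x) ^ (-γ)) volume (c - c) (c - 0) :=
      (intervalIntegral.intervalIntegrable_rpow' hr (a := c) (b := 0)).comp_sub_left c
    simp only [sub_self, sub_zero] at h1
    have h2 : IntegrableOn (fun x : ℝ => (c - x) ^ (-γ)) (Ioc 0 c) :=
      (intervalIntegrable_iff_integrableOn_Ioc_of_le hc).1 h1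
    apply h2.congr_fun _ measurableSet_Ioc
    intro y hy
    show (c - y) ^ (-γ) = |y - c| ^ (-γ)
    rw [abs_sub_comm, abs_of_nonneg (by linarith [hy.2] : 0 ≤ c - y)]
  · have h1 : IntervalIntegrable (fun x : ℝ => (x - c) ^ (-γ)) volume (0 + c) (b - c + c) :=
      ((intervalIntegral.intervalIntegrable_rpow' hr (a := 0) (b := b - c)).comp_sub_right c)
    simp only [zero_add, sub_add_cancel] at h1
    have h2 : IntegrableOn (fun x : ℝ => (x - c) ^ (-γ)) (Ioc c b) :=
      (intervalIntegrable_iff_integrableOn_Ioc_of_le hcb).1 h1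
    apply h2.congr_fun _ measurableSet_Ioc
    intro y hy
    show (y - c) ^ (-γ) = |y - c| ^ (-γ)
    rw [abs_of_nonneg (by linarith [hy.1] : 0 ≤ y - c)]

/-- Positivity of the integral. -/
lemma Uda_pos (hp : 0 < p) (hpγ : p < γ) (hγ1 : γ < 1) :
    0 < ∫ y in Ioi (0:ℝ), y ^ (-γ) * (p * (y+1)^(p-1)) := by
  rw [setIntegral_pos_iff_support_of_nonneg_ae ?_ (Uda_integrable_A hp hpγ hγ1)]
  · have hsub : Ioi (0:ℝ) ⊆ Function.support (fun y => y ^ (-γ) * (p * (y+1)^(p-1))) := by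
      intro y hy
      have hy0 : (0:ℝ) < y := hy
      exact ne_of_gt (mul_pos (Real.rpow_pos_of_pos hy0 _)
        (mul_pos hp (Real.rpow_pos_of_pos (by linarith) _)))
    rw [Set.inter_eq_self_of_subset_right hsub]
    simp [Real.volume_Ioi]
  · filter_upwards [ae_restrict_mem measurableSet_Ioi] with y hy
    have hy0 : (0:ℝ) < y := hy
    exact le_of_lt (mul_pos (Real.rpow_pos_of_pos hy0 _)
      (mul_pos hp (Real.rpow_pos_of_pos (by linarith) _)))

/-- Integration by parts identity. -/
lemma Uda_ibp (hp : 0 < p) (hpγ : p < γ) (hγ1 : γ < 1) :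
    ∫ y in Ioi (0:ℝ), y ^ (-γ) * (p * (y+1)^(p-1))
      = γ * ∫ y in Ioi (0:ℝ), y ^ (-γ-1) * ((y+1)^p - 1) := by
  have hγ0 : 0 < γ := hp.trans hpγ
  have hp1 : p ≤ 1 := by linarith
  have hg0 : (0:ℝ) ^ (-γ) * ((0+1)^p - 1) = 0 := by norm_num
  have hderiv : ∀ y ∈ Ioi (0:ℝ), HasDerivAt (fun y : ℝ => y ^ (-γ) * ((y+1)^p - 1))
      (y ^ (-γ) * (p * (y+1)^(p-1)) + (-γ) * (y ^ (-γ-1) * ((y+1)^p - 1))) y := by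
    intro y hy
    have hy0 : (0:ℝ) < y := hy
    have h1 : HasDerivAt (fun y : ℝ => y ^ (-γ)) (-γ * y ^ (-γ-1)) y := by
      have := Real.hasDerivAt_rpow_const (x := y) (p := -γ) (Or.inl hy0.ne')
      simpa [show -γ - 1 = -γ - 1 by ring] using this
    have h2 : HasDerivAt (fun y : ℝ => (y+1)^p - 1) (p * (y+1)^(p-1)) y := by
      have h0 : HasDerivAt (fun y : ℝ => y + 1) 1 y := (hasDerivAt_id y).add_const 1
      have := (h0.rpow_const (p := p) (Or.inl (by intro h; nlinarith [h] : y + 1 ≠ 0))).sub_const 1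
      simpa using this
    have := h1.mul h2
    exact this.congr_deriv (by ring)
  have hcont : ContinuousWithinAt (fun y : ℝ => y ^ (-γ) * ((y+1)^p - 1)) (Ici 0) 0 := by
    rw [ContinuousWithinAt, hg0]
    apply squeeze_zero' (g := fun y : ℝ => p * y ^ (1-γ))
    · filter_upwards [self_mem_nhdsWithin] with y (hy : y ∈ Ici (0:ℝ))
      exact mul_nonneg (Real.rpow_nonneg hy _) (Uda_f_nonneg hp.le hy)
    · filter_upwards [self_mem_nhdsWithin] with y (hy : y ∈ Ici (0:ℝ))
      rcases eq_or_lt_of_le (Set.mem_Ici.mp hy) with rfl | hy0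
      · norm_num [Real.zero_rpow (by linarith : (1:ℝ) - γ ≠ 0)]
      · calc y ^ (-γ) * ((y+1)^p - 1) ≤ y ^ (-γ) * (p * y) :=
              mul_le_mul_of_nonneg_left (Uda_f_le hp.le hp1 hy0.le)
                (Real.rpow_nonneg hy0.le _)
          _ = p * y ^ (1-γ) := by
              rw [show (1-γ:ℝ) = -γ+1 by ring, Real.rpow_add hy0, Real.rpow_one]; ring
    · have : Tendsto (fun y : ℝ => p * y ^ (1-γ)) (𝓝 0) (𝓝 (p * (0:ℝ) ^ (1-γ))) :=
        ((Real.continuous_rpow_const (by linarith : (0:ℝ) ≤ 1-γ)).tendsto 0).const_mul p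
      rw [Real.zero_rpow (by linarith : (1:ℝ) - γ ≠ 0), mul_zero] at this
      exact this.mono_left nhdsWithin_le_nhds
  have htop : Tendsto (fun y : ℝ => y ^ (-γ) * ((y+1)^p - 1)) atTop (𝓝 0) := by
    apply squeeze_zero' (g := fun y : ℝ => 2 * y ^ (p-γ))
    · filter_upwards [eventually_ge_atTop (1:ℝ)] with y hy
      exact mul_nonneg (Real.rpow_nonneg (by linarith) _) (Uda_f_nonneg hp.le (by linarith))
    · filter_upwards [eventually_ge_atTop (1:ℝ)] with y hy
      have hy0 : (0:ℝ) < y := by linarith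
      calc y ^ (-γ) * ((y+1)^p - 1) ≤ y ^ (-γ) * (2 * y ^ p) :=
            mul_le_mul_of_nonneg_left (Uda_f_le' hp.le hp1 hy) (Real.rpow_nonneg hy0.le _)
        _ = 2 * y ^ (p-γ) := by
            rw [show (p-γ:ℝ) = -γ+p by ring, Real.rpow_add hy0]; ring
    · have := tendsto_rpow_neg_atTop (by linarith : (0:ℝ) < γ - p)
      have h2 : Tendsto (fun y : ℝ => 2 * y ^ (-(γ-p))) atTop (𝓝 (2 * 0)) := this.const_mul 2
      rw [mul_zero] at h2
      convert h2 using 2 with y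
      ring_nf
  have hint : IntegrableOn (fun y : ℝ =>
      y ^ (-γ) * (p * (y+1)^(p-1)) + (-γ) * (y ^ (-γ-1) * ((y+1)^p - 1))) (Ioi 0) :=
    (Uda_integrable_A hp hpγ hγ1).add ((Uda_integrable_B hp hpγ hγ1).const_mul (-γ))
  have key := integral_Ioi_of_hasDerivAt_of_tendsto hcont hderiv hint htop
  rw [hg0] at key
  rw [sub_zero] at key
  rw [integral_add (Uda_integrable_A hp hpγ hγ1)
    ((Uda_integrable_B hp hpγ hγ1).const_mul (-γ)), MeasureTheory.integral_const_mul] at key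
  linarith [key]

/-- Integrability of `|y+z|^(-γ)` on `Ioc 0 b`, `z ≥ 0`. -/
lemma Uda_integrable_addK (hγ0 : 0 < γ) (hγ1 : γ < 1) {z b : ℝ} (hz : 0 ≤ z) (hb : 0 ≤ b) :
    IntegrableOn (fun y : ℝ => |y + z| ^ (-γ)) (Ioc 0 b) := by
  have hr : (-1:ℝ) < -γ := by linarith
  have h1 : IntervalIntegrable (fun x : ℝ => (x + z) ^ (-γ)) volume (z - z) (b + z - z) :=
    (intervalIntegral.intervalIntegrable_rpow' hr (a := z) (b := b + z)).comp_add_right z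
  simp only [sub_self, add_sub_cancel_right] at h1
  have h2 : IntegrableOn (fun x : ℝ => (x + z) ^ (-γ)) (Ioc 0 b) :=
    (intervalIntegrable_iff_integrableOn_Ioc_of_le hb).1 h1
  apply h2.congr_fun _ measurableSet_Ioc
  intro y hy
  show (y + z) ^ (-γ) = |y + z| ^ (-γ)
  rw [abs_of_nonneg (by linarith [hy.1] : 0 ≤ y + z)]

/-- Integrability of the kernel integrand on `Ioc 0 (2z)`. -/
lemma Uda_intOn_Ioc (hp : 0 < p) (hpγ : p < γ) (hγ1 : γ < 1) {z : ℝ} (hz : 0 < z) :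
    IntegrableOn (fun y : ℝ => (|y - z| ^ (-γ) - |y + z| ^ (-γ)) * ((y + 1) ^ p - 1))
      (Ioc 0 (2*z)) := by
  have hγ0 : 0 < γ := hp.trans hpγ
  have hg : IntegrableOn (fun y : ℝ => (|y - z| ^ (-γ) + |y + z| ^ (-γ)) * (p * (2*z)))
      (Ioc 0 (2*z)) :=
    (((Uda_integrable_absK hγ0 hγ1 hz.le (by linarith)).add
      (Uda_integrable_addK hγ0 hγ1 hz.le (by linarith))).mul_const _)
  apply Uda_integrableOn_mono measurableSet_Ioc hg
  · exact (by fun_prop : Measurable fun y : ℝ =>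
      (|y - z| ^ (-γ) - |y + z| ^ (-γ)) * ((y+1)^p - 1)).aestronglyMeasurable
  · intro y hy
    have hy0 : 0 < y := hy.1
    have h1 : (0:ℝ) ≤ |y - z| ^ (-γ) := Real.rpow_nonneg (abs_nonneg _) _
    have h2 : (0:ℝ) ≤ |y + z| ^ (-γ) := Real.rpow_nonneg (abs_nonneg _) _
    have hf0 : 0 ≤ (y+1)^p - 1 := Uda_f_nonneg hp.le hy0.le
    have hfb : (y+1)^p - 1 ≤ p * (2*z) := by
      calc (y+1)^p - 1 ≤ p * y := Uda_f_le hp.le (by linarith) hy0.le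
        _ ≤ p * (2*z) := mul_le_mul_of_nonneg_left hy.2 hp.le
    rw [abs_mul, abs_of_nonneg hf0]
    have h3 : abs (|y - z| ^ (-γ) - |y + z| ^ (-γ)) ≤ |y - z| ^ (-γ) + |y + z| ^ (-γ) := by
      have h4 := abs_sub (|y - z| ^ (-γ)) (|y + z| ^ (-γ))
      rwa [abs_of_nonneg h1, abs_of_nonneg h2] at h4
    exact mul_le_mul h3 hfb hf0 (by positivity)

/-- Integrability of the kernel integrand on `Ioi (2z)`. -/
lemma Uda_intOn_Ioi (hp : 0 < p) (hpγ : p < γ) (hγ1 : γ < 1) {z : ℝ} (hz : 0 < z) :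
    IntegrableOn (fun y : ℝ => (|y - z| ^ (-γ) - |y + z| ^ (-γ)) * ((y + 1) ^ p - 1))
      (Ioi (2*z)) := by
  have hγ0 : 0 < γ := hp.trans hpγ
  have hg : IntegrableOn (fun y : ℝ => (2:ℝ)^(γ+2) * γ * z * (y ^ (-γ-1) * ((y+1)^p - 1)))
      (Ioi (2*z)) :=
    (((Uda_integrable_B hp hpγ hγ1).mono_set (Ioi_subset_Ioi (by linarith))).const_mul _)
  apply Uda_integrableOn_mono measurableSet_Ioi hg
  · exact (by fun_prop : Measurable fun y : ℝ =>
      (|y - z| ^ (-γ) - |y + z| ^ (-γ)) * ((y+1)^p - 1)).aestronglyMeasurable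
  · intro y hy
    have hy2 : 2*z < y := hy
    have hy0 : 0 < y := by linarith
    have e1 : |y - z| = y - z := abs_of_pos (by linarith)
    have e2 : |y + z| = y + z := abs_of_pos (by linarith)
    have hf0 : 0 ≤ (y+1)^p - 1 := Uda_f_nonneg hp.le hy0.le
    have hK0 : 0 ≤ (y - z) ^ (-γ) - (y + z) ^ (-γ) := by
      have := Real.rpow_le_rpow_of_nonpos (by linarith : (0:ℝ) < y - z)
        (by linarith : y - z ≤ y + z) (by linarith : -γ ≤ 0)
      linarith
    rw [e1, e2, abs_mul, abs_of_nonneg hK0, abs_of_nonneg hf0]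
    have hK := Uda_K_le hγ0 hγ1 hz hy2
    calc ((y - z) ^ (-γ) - (y + z) ^ (-γ)) * ((y+1)^p - 1)
        ≤ ((2:ℝ)^(γ+2) * γ * z * y ^ (-γ-1)) * ((y+1)^p - 1) :=
          mul_le_mul_of_nonneg_right hK hf0
      _ = (2:ℝ)^(γ+2) * γ * z * (y ^ (-γ-1) * ((y+1)^p - 1)) := by ring

/-- Bound for the near-singularity part of the integral. -/
lemma Uda_term1 (hp : 0 < p) (hpγ : p < γ) (hγ1 : γ < 1) {z : ℝ} (hz : 0 < z) :
    |∫ y in Ioc (0:ℝ) (2*z), (|y - z| ^ (-γ) - |y + z| ^ (-γ)) * ((y + 1) ^ p - 1)|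
      ≤ 10 * p / (1-γ) * (z * z ^ (1-γ)) := by
  have hγ0 : 0 < γ := hp.trans hpγ
  have h1γ : 0 < 1 - γ := by linarith
  have hrp : (-1:ℝ) < -γ := by linarith
  have hz1 : (0:ℝ) ≤ z := hz.le
  have E0 : ∫ x in (0:ℝ)..z, x ^ (-γ) = z ^ (1-γ) / (1-γ) := by
    rw [integral_rpow (Or.inl hrp), Real.zero_rpow (by linarith : -γ + 1 ≠ 0),
      show -γ+1 = 1-γ by ring]
    ring
  have EA : ∫ y in Ioc (0:ℝ) z, |y - z| ^ (-γ) = z ^ (1-γ) / (1-γ) := by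
    rw [← intervalIntegral.integral_of_le hz1]
    have h : ∫ y in (0:ℝ)..z, |y - z| ^ (-γ) = ∫ y in (0:ℝ)..z, (z - y) ^ (-γ) := by
      apply intervalIntegral.integral_congr
      intro y hy
      rw [uIcc_of_le hz1] at hy
      show |y - z| ^ (-γ) = (z - y) ^ (-γ)
      rw [abs_sub_comm, abs_of_nonneg (by linarith [hy.2] : 0 ≤ z - y)]
    rw [h, intervalIntegral.integral_comp_sub_left (fun x => x ^ (-γ)) z]
    simpa using E0
  have EB : ∫ y in Ioc z (2*z), |y - z| ^ (-γ) = z ^ (1-γ) / (1-γ) := by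
    rw [← intervalIntegral.integral_of_le (by linarith : z ≤ 2*z)]
    have h : ∫ y in z..(2*z), |y - z| ^ (-γ) = ∫ y in z..(2*z), (y - z) ^ (-γ) := by
      apply intervalIntegral.integral_congr
      intro y hy
      rw [uIcc_of_le (by linarith : z ≤ 2*z)] at hy
      show |y - z| ^ (-γ) = (y - z) ^ (-γ)
      rw [abs_of_nonneg (by linarith [hy.1] : 0 ≤ y - z)]
    rw [h, intervalIntegral.integral_comp_sub_right (fun x => x ^ (-γ)) z,
      sub_self, show (2*z - z : ℝ) = z by ring]
    exact E0
  have EC : ∫ y in Ioc (0:ℝ) (2*z), |y + z| ^ (-γ) ≤ 3 * z ^ (1-γ) / (1-γ) := by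
    rw [← intervalIntegral.integral_of_le (by linarith : (0:ℝ) ≤ 2*z)]
    have h : ∫ y in (0:ℝ)..(2*z), |y + z| ^ (-γ) = ∫ y in (0:ℝ)..(2*z), (y + z) ^ (-γ) := by
      apply intervalIntegral.integral_congr
      intro y hy
      rw [uIcc_of_le (by linarith : (0:ℝ) ≤ 2*z)] at hy
      show |y + z| ^ (-γ) = (y + z) ^ (-γ)
      rw [abs_of_nonneg (by linarith [hy.1] : 0 ≤ y + z)]
    rw [h, intervalIntegral.integral_comp_add_right (fun x => x ^ (-γ)) z,
      zero_add, show (2*z + z : ℝ) = 3*z by ring, integral_rpow (Or.inl hrp)]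
    have h4 : (3*z : ℝ) ^ (-γ+1) ≤ 3 * z ^ (-γ+1) := by
      rw [Real.mul_rpow (by norm_num) hz1]
      have h5 : (3:ℝ) ^ (-γ+1) ≤ 3 ^ (1:ℝ) :=
        Real.rpow_le_rpow_of_exponent_le (by norm_num) (by linarith)
      rw [Real.rpow_one] at h5
      nlinarith [Real.rpow_nonneg hz1 (-γ+1)]
    have h5 : (0:ℝ) ≤ z ^ (-γ+1) := Real.rpow_nonneg hz1 _
    rw [show -γ+1 = 1-γ by ring] at h4 h5 ⊢
    rw [div_le_div_iff₀ (by linarith) (by linarith)]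
    nlinarith
  have hIa : IntegrableOn (fun y : ℝ => |y - z| ^ (-γ)) (Ioc 0 (2*z)) :=
    Uda_integrable_absK hγ0 hγ1 hz.le (by linarith)
  have hIb : IntegrableOn (fun y : ℝ => |y + z| ^ (-γ)) (Ioc 0 (2*z)) :=
    Uda_integrable_addK hγ0 hγ1 hz.le (by linarith)
  have hsumA : ∫ y in Ioc (0:ℝ) (2*z), |y - z| ^ (-γ) = 2 * z ^ (1-γ) / (1-γ) := by
    rw [← Ioc_union_Ioc_eq_Ioc hz1 (by linarith : z ≤ 2*z),
      setIntegral_union (Set.Ioc_disjoint_Ioc_of_le le_rfl) measurableSet_Ioc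
        (hIa.mono_set (Set.Ioc_subset_Ioc_right (by linarith)))
        (hIa.mono_set (Set.Ioc_subset_Ioc_left hz1)), EA, EB]
    ring
  have habs : |∫ y in Ioc (0:ℝ) (2*z), (|y - z| ^ (-γ) - |y + z| ^ (-γ)) * ((y + 1) ^ p - 1)|
      ≤ ∫ y in Ioc (0:ℝ) (2*z), (|y - z| ^ (-γ) + |y + z| ^ (-γ)) * (p * (2*z)) := by
    rw [← Real.norm_eq_abs]
    apply norm_integral_le_of_norm_le ((hIa.add hIb).mul_const _)
    filter_upwards [ae_restrict_mem measurableSet_Ioc] with y hy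
    have hy0 : 0 < y := hy.1
    have h1 : (0:ℝ) ≤ |y - z| ^ (-γ) := Real.rpow_nonneg (abs_nonneg _) _
    have h2 : (0:ℝ) ≤ |y + z| ^ (-γ) := Real.rpow_nonneg (abs_nonneg _) _
    have hf0 : 0 ≤ (y+1)^p - 1 := Uda_f_nonneg hp.le hy0.le
    have hfb : (y+1)^p - 1 ≤ p * (2*z) := by
      calc (y+1)^p - 1 ≤ p * y := Uda_f_le hp.le (by linarith) hy0.le
        _ ≤ p * (2*z) := mul_le_mul_of_nonneg_left hy.2 hp.le
    rw [Real.norm_eq_abs, abs_mul, abs_of_nonneg hf0]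
    have h3 : abs (|y - z| ^ (-γ) - |y + z| ^ (-γ)) ≤ |y - z| ^ (-γ) + |y + z| ^ (-γ) := by
      have h4 := abs_sub (|y - z| ^ (-γ)) (|y + z| ^ (-γ))
      rwa [abs_of_nonneg h1, abs_of_nonneg h2] at h4
    exact mul_le_mul h3 hfb hf0 (add_nonneg h1 h2)
  have hval : ∫ y in Ioc (0:ℝ) (2*z), (|y - z| ^ (-γ) + |y + z| ^ (-γ)) * (p * (2*z))
      ≤ (2 * z ^ (1-γ) / (1-γ) + 3 * z ^ (1-γ) / (1-γ)) * (p * (2*z)) := by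
    rw [MeasureTheory.integral_mul_const, integral_add hIa hIb, hsumA]
    have hEC := EC
    have hzp : (0:ℝ) ≤ p * (2*z) := by positivity
    apply mul_le_mul_of_nonneg_right _ hzp
    linarith
  have hzz : z * z ^ (1-γ) = z ^ (1-γ) * z := by ring
  calc |∫ y in Ioc (0:ℝ) (2*z), (|y - z| ^ (-γ) - |y + z| ^ (-γ)) * ((y + 1) ^ p - 1)|
      ≤ (2 * z ^ (1-γ) / (1-γ) + 3 * z ^ (1-γ) / (1-γ)) * (p * (2*z)) := habs.trans hval
    _ = 10 * p / (1-γ) * (z * z ^ (1-γ)) := by field_simp; ring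

lemma Uda_term2 (hp : 0 < p) (hpγ : p < γ) (hγ1 : γ < 1) :
    Tendsto (fun z => (∫ y in Ioi (2*z), (|y - z| ^ (-γ) - |y + z| ^ (-γ)) * ((y + 1) ^ p - 1)) / z)
      (𝓝[>] (0:ℝ))
      (𝓝 (∫ y in Ioi (0:ℝ), 2 * γ * (y ^ (-γ-1) * ((y + 1) ^ p - 1)))) := by
  have hγ0 : 0 < γ := hp.trans hpγ
  have key : Tendsto (fun z => ∫ y in Ioi (0:ℝ),
      Set.indicator (Ioi (2*z)) (fun y => (|y - z| ^ (-γ) - |y + z| ^ (-γ)) * ((y + 1) ^ p - 1) / z) y)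
      (𝓝[>] (0:ℝ))
      (𝓝 (∫ y in Ioi (0:ℝ), 2 * γ * (y ^ (-γ-1) * ((y + 1) ^ p - 1)))) := by
    apply MeasureTheory.tendsto_integral_filter_of_dominated_convergence
      (bound := fun y => (2:ℝ)^(γ+2) * γ * (y ^ (-γ-1) * ((y + 1) ^ p - 1)))
    · filter_upwards with z
      exact ((by fun_prop : Measurable fun y : ℝ =>
        (|y - z| ^ (-γ) - |y + z| ^ (-γ)) * ((y + 1) ^ p - 1) / z).indicator
          measurableSet_Ioi).aestronglyMeasurable
    · filter_upwards [self_mem_nhdsWithin] with z (hz : (0:ℝ) < z)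
      filter_upwards [ae_restrict_mem measurableSet_Ioi] with y (hy : (0:ℝ) < y)
      have hf0 : 0 ≤ (y+1)^p - 1 := Uda_f_nonneg hp.le hy.le
      have hb1 : (0:ℝ) ≤ y ^ (-γ-1) := Real.rpow_nonneg hy.le _
      have hb2 : (0:ℝ) ≤ (2:ℝ)^(γ+2) := Real.rpow_nonneg (by norm_num) _
      have hb0 : 0 ≤ (2:ℝ)^(γ+2) * γ * (y ^ (-γ-1) * ((y + 1) ^ p - 1)) := by positivity
      by_cases hmem : y ∈ Ioi (2*z)
      · rw [Set.indicator_of_mem hmem]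
        have hy2 : 2*z < y := hmem
        have e1 : |y - z| = y - z := abs_of_pos (by linarith)
        have e2 : |y + z| = y + z := abs_of_pos (by linarith)
        have hK0 : 0 ≤ (y - z) ^ (-γ) - (y + z) ^ (-γ) := by
          have := Real.rpow_le_rpow_of_nonpos (by linarith : (0:ℝ) < y - z)
            (by linarith : y - z ≤ y + z) (by linarith : -γ ≤ 0)
          linarith
        rw [Real.norm_eq_abs, e1, e2, abs_of_nonneg (by positivity)]
        rw [div_le_iff₀ hz]
        have hK := Uda_K_le hγ0 hγ1 hz hy2
        calc ((y - z) ^ (-γ) - (y + z) ^ (-γ)) * ((y+1)^p - 1)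
            ≤ ((2:ℝ)^(γ+2) * γ * z * y ^ (-γ-1)) * ((y+1)^p - 1) :=
              mul_le_mul_of_nonneg_right hK hf0
          _ = (2:ℝ)^(γ+2) * γ * (y ^ (-γ-1) * ((y + 1) ^ p - 1)) * z := by ring
      · rw [Set.indicator_of_notMem hmem]
        simpa using hb0
    · exact (Uda_integrable_B hp hpγ hγ1).const_mul _
    · filter_upwards [ae_restrict_mem measurableSet_Ioi] with y (hy : (0:ℝ) < y)
      -- (identical to the example above)
      have hd : HasDerivAt (fun z : ℝ => (y - z) ^ (-γ) - (y + z) ^ (-γ))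
          (2 * γ * y ^ (-γ-1)) 0 := by
        have hne : y - 0 ≠ 0 := by simpa using hy.ne'
        have hne2 : y + 0 ≠ 0 := by simpa using hy.ne'
        have hd1 : HasDerivAt (fun z : ℝ => (y - z) ^ (-γ))
            ((-1) * (-γ) * (y - 0) ^ (-γ-1)) 0 :=
          ((hasDerivAt_id (0:ℝ)).const_sub y).rpow_const (Or.inl hne)
        have hd2 : HasDerivAt (fun z : ℝ => (y + z) ^ (-γ))
            (1 * (-γ) * (y + 0) ^ (-γ-1)) 0 :=
          ((hasDerivAt_id (0:ℝ)).const_add y).rpow_const (Or.inl hne2)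
        have h3 := hd1.sub hd2
        exact h3.congr_deriv (by rw [sub_zero, add_zero]; ring)
      have hslope : Tendsto (fun z : ℝ => ((y - z) ^ (-γ) - (y + z) ^ (-γ)) / z)
          (𝓝[>] (0:ℝ)) (𝓝 (2 * γ * y ^ (-γ-1))) := by
        have h1 := hasDerivAt_iff_tendsto_slope.1 hd
        have h2 : Tendsto (slope (fun z : ℝ => (y - z) ^ (-γ) - (y + z) ^ (-γ)) 0)
            (𝓝[>] (0:ℝ)) (𝓝 (2 * γ * y ^ (-γ-1))) :=
          h1.mono_left (nhdsWithin_mono 0 (fun x hx => ne_of_gt hx))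
        apply h2.congr
        intro z
        rw [slope_def_field, sub_zero, add_zero, sub_zero, sub_self, sub_zero]
      have hmul : Tendsto (fun z : ℝ => ((y - z) ^ (-γ) - (y + z) ^ (-γ)) / z * ((y+1)^p - 1))
          (𝓝[>] (0:ℝ)) (𝓝 (2 * γ * y ^ (-γ-1) * ((y+1)^p - 1))) := hslope.mul_const _
      rw [show (2 : ℝ) * γ * y ^ (-γ-1) * ((y+1)^p - 1)
          = 2 * γ * (y ^ (-γ-1) * ((y+1)^p - 1)) by ring] at hmul
      apply hmul.congr'
      have hmem : Ioo (0:ℝ) (y/2) ∈ 𝓝[>] (0:ℝ) := Ioo_mem_nhdsGT_of_mem (by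
        constructor
        · exact le_refl 0
        · linarith)
      filter_upwards [hmem] with z hz
      have hz0 : 0 < z := hz.1
      have hyz : 2*z < y := by rcases hz with ⟨h1, h2⟩; linarith
      rw [Set.indicator_of_mem (by exact hyz : y ∈ Ioi (2*z))]
      rw [abs_of_pos (by linarith : (0:ℝ) < y - z), abs_of_pos (by linarith : (0:ℝ) < y + z)]
      ring
  apply key.congr'
  filter_upwards [self_mem_nhdsWithin] with z (hz : (0:ℝ) < z)
  rw [MeasureTheory.setIntegral_indicator measurableSet_Ioi,
    Set.inter_eq_self_of_subset_right (Ioi_subset_Ioi (by linarith : (0:ℝ) ≤ 2*z)),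
    ← integral_div]

lemma Uda_right (hp : 0 < p) (hpγ : p < γ) (hγ1 : γ < 1) :
    Tendsto (fun z => (∫ y in Ioi (0:ℝ), (|y - z| ^ (-γ) - |y + z| ^ (-γ)) * ((y + 1) ^ p - 1)) / z)
      (𝓝[>] (0:ℝ))
      (𝓝 (∫ y in Ioi (0:ℝ), 2 * γ * (y ^ (-γ-1) * ((y + 1) ^ p - 1)))) := by
  have hγ0 : 0 < γ := hp.trans hpγ
  have h1γ : 0 < 1 - γ := by linarith
  have t1 : Tendsto (fun z => (∫ y in Ioc (0:ℝ) (2*z),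
      (|y - z| ^ (-γ) - |y + z| ^ (-γ)) * ((y + 1) ^ p - 1)) / z) (𝓝[>] (0:ℝ)) (𝓝 0) := by
    rw [tendsto_zero_iff_abs_tendsto_zero]
    apply squeeze_zero' (g := fun z => 10 * p / (1-γ) * z ^ (1-γ))
    · filter_upwards with z
      exact abs_nonneg _
    · filter_upwards [self_mem_nhdsWithin] with z (hz : (0:ℝ) < z)
      show |(∫ y in Ioc (0:ℝ) (2*z),
        (|y - z| ^ (-γ) - |y + z| ^ (-γ)) * ((y + 1) ^ p - 1)) / z| ≤ _
      rw [abs_div, abs_of_pos hz, div_le_iff₀ hz]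
      calc |∫ y in Ioc (0:ℝ) (2*z), (|y - z| ^ (-γ) - |y + z| ^ (-γ)) * ((y + 1) ^ p - 1)|
          ≤ 10 * p / (1-γ) * (z * z ^ (1-γ)) := Uda_term1 hp hpγ hγ1 hz
        _ = 10 * p / (1-γ) * z ^ (1-γ) * z := by ring
    · have h : Tendsto (fun z : ℝ => 10 * p / (1-γ) * z ^ (1-γ)) (𝓝 0)
          (𝓝 (10 * p / (1-γ) * (0:ℝ) ^ (1-γ))) :=
        ((Real.continuous_rpow_const (by linarith)).tendsto 0).const_mul _
      rw [Real.zero_rpow (by linarith : (1:ℝ) - γ ≠ 0), mul_zero] at h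
      exact h.mono_left nhdsWithin_le_nhds
  have t2 := Uda_term2 hp hpγ hγ1
  have hsum := t1.add t2
  rw [zero_add] at hsum
  apply hsum.congr'
  filter_upwards [self_mem_nhdsWithin] with z (hz : (0:ℝ) < z)
  show _ = (∫ y in Ioi (0:ℝ), (|y - z| ^ (-γ) - |y + z| ^ (-γ)) * ((y + 1) ^ p - 1)) / z
  rw [← Ioc_union_Ioi_eq_Ioi (by linarith : (0:ℝ) ≤ 2*z),
    setIntegral_union (Set.Ioc_disjoint_Ioi le_rfl) measurableSet_Ioi
      (Uda_intOn_Ioc hp hpγ hγ1 hz) (Uda_intOn_Ioi hp hpγ hγ1 hz), add_div]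

end UDerivAux

open Set Filter Topology in
theorem U_deriv_at_zero (γ p : ℝ) (hp : 0 < p) (hpγ : p < γ) (hγ1 : γ < 1) :
    IntegrableOn (fun y => y ^ (-γ) * (p * (y + 1) ^ (p - 1))) (Set.Ioi (0 : ℝ)) ∧
    0 < 2 * ∫ y in Set.Ioi (0 : ℝ), y ^ (-γ) * (p * (y + 1) ^ (p - 1)) ∧
    HasDerivAt
      (fun z => ∫ y in Set.Ioi (0 : ℝ),
        (1 / |y - z| ^ γ - 1 / |y + z| ^ γ) * ((y + 1) ^ p - 1))
      (2 * ∫ y in Set.Ioi (0 : ℝ), y ^ (-γ) * (p * (y + 1) ^ (p - 1))) 0 := by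
  have hγ0 : 0 < γ := hp.trans hpγ
  refine ⟨Uda_integrable_A hp hpγ hγ1, by linarith [Uda_pos hp hpγ hγ1], ?_⟩
  have hfun : (fun z => ∫ y in Set.Ioi (0:ℝ),
      (1 / |y - z| ^ γ - 1 / |y + z| ^ γ) * ((y + 1) ^ p - 1))
      = (fun z => ∫ y in Set.Ioi (0:ℝ),
      (|y - z| ^ (-γ) - |y + z| ^ (-γ)) * ((y + 1) ^ p - 1)) := by
    funext z
    congr 1
    funext y
    rw [Real.rpow_neg (abs_nonneg _), Real.rpow_neg (abs_nonneg _), one_div, one_div]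
  rw [hfun]
  have hval : 2 * ∫ y in Set.Ioi (0:ℝ), y ^ (-γ) * (p * (y + 1) ^ (p - 1))
      = ∫ y in Set.Ioi (0:ℝ), 2 * γ * (y ^ (-γ-1) * ((y + 1) ^ p - 1)) := by
    rw [Uda_ibp hp hpγ hγ1, MeasureTheory.integral_const_mul]
    ring
  rw [hval]
  set F := fun z => ∫ y in Set.Ioi (0:ℝ),
    (|y - z| ^ (-γ) - |y + z| ^ (-γ)) * ((y + 1) ^ p - 1) with hF
  have hF0 : F 0 = 0 := by
    rw [hF]
    simp
  have hodd : ∀ z, F (-z) = - F z := by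
    intro z
    rw [hF, ← MeasureTheory.integral_neg]
    simp only
    congr 1
    funext y
    rw [sub_neg_eq_add, ← sub_eq_add_neg]
    ring
  rw [hasDerivAt_iff_tendsto_slope]
  have hslope : ∀ z : ℝ, slope F 0 z = F z / z := by
    intro z
    rw [slope_def_field, hF0, sub_zero, sub_zero]
  rw [← nhdsLT_sup_nhdsGT (0:ℝ), Filter.tendsto_sup]
  have hright : Tendsto (slope F 0) (𝓝[>] (0:ℝ))
      (𝓝 (∫ y in Set.Ioi (0:ℝ), 2 * γ * (y ^ (-γ-1) * ((y + 1) ^ p - 1)))) := by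
    apply (Uda_right hp hpγ hγ1).congr
    intro z
    exact (hslope z).symm
  refine ⟨?_, hright⟩
  have hneg : Tendsto (fun w : ℝ => -w) (𝓝[<] (0:ℝ)) (𝓝[>] (0:ℝ)) := by
    apply tendsto_nhdsWithin_of_tendsto_nhds_of_eventually_within
    · have h := (continuous_neg.tendsto (0:ℝ))
      rw [neg_zero] at h
      exact h.mono_left nhdsWithin_le_nhds
    · filter_upwards [self_mem_nhdsWithin] with w (hw : w < 0)
      exact neg_pos.2 hw
  have hcomp := hright.comp hneg
  apply hcomp.congr
  intro w
  show slope F 0 (-w) = slope F 0 w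
  rw [hslope, hslope, hodd, neg_div_neg_eq]
end

section
/- For 0 < p < γ < 1 and U(z) = ∫₀^∞ (|y-z|^{-γ} - |y+z|^{-γ})((y+1)^p - 1) dy, there is a constant C > 0 with lim_{x→∞} U(x)/x^{1-γ+p} = C; in particular the limit equals ∫₀^∞ (|z-1|^{-γ} - |z+1|^{-γ}) z^p dz > 0. -/
open Real MeasureTheory Filter Set Topology

private lemma mvt_rpow {γ a b : ℝ} (hγ : 0 < γ) (ha : 0 < a) (hab : a ≤ b) :
    a ^ (-γ) - b ^ (-γ) ≤ γ * a ^ (-γ - 1) * (b - a) := by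
  rcases eq_or_lt_of_le hab with rfl | hab
  · simp
  have hcont : ContinuousOn (fun x : ℝ => x ^ (-γ)) (Icc a b) := fun x hx =>
    (Real.continuousAt_rpow_const x _ (Or.inl (ne_of_gt (lt_of_lt_of_le ha hx.1)))).continuousWithinAt
  have hderiv : ∀ x ∈ Ioo a b, HasDerivAt (fun x : ℝ => x ^ (-γ)) (-γ * x ^ (-γ - 1)) x :=
    fun x hx => Real.hasDerivAt_rpow_const (Or.inl (ne_of_gt (lt_trans ha hx.1)))
  obtain ⟨c, hc, hceq⟩ := exists_hasDerivAt_eq_slope _ _ hab hcont hderiv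
  have hca : a ≤ c := hc.1.le
  have hba : 0 < b - a := sub_pos.2 hab
  have h1 : b ^ (-γ) - a ^ (-γ) = -γ * c ^ (-γ - 1) * (b - a) := by
    rw [hceq]; field_simp
  have h2 : c ^ (-γ - 1) ≤ a ^ (-γ - 1) :=
    Real.rpow_le_rpow_of_nonpos ha hca (by linarith)
  have h3 := mul_le_mul_of_nonneg_right (mul_le_mul_of_nonneg_left h2 hγ.le) hba.le
  nlinarith

private lemma g_pos {γ : ℝ} (hγ : 0 < γ) {z : ℝ} (hz : 0 < z) (hz1 : z ≠ 1) :
    0 < 1 / |z - 1| ^ γ - 1 / |z + 1| ^ γ := by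
  have h1 : 0 < |z - 1| := abs_pos.2 (sub_ne_zero.2 hz1)
  have h2 : |z - 1| < |z + 1| := by
    rw [abs_of_pos (by linarith : (0:ℝ) < z + 1), abs_lt]
    constructor <;> nlinarith
  have h3 : |z - 1| ^ γ < |z + 1| ^ γ := Real.rpow_lt_rpow h1.le h2 hγ
  have h4 : (0:ℝ) < |z - 1| ^ γ := Real.rpow_pos_of_pos h1 γ
  have h5 : 1 / |z + 1| ^ γ < 1 / |z - 1| ^ γ := one_div_lt_one_div_of_lt h4 h3
  linarith

private lemma g_le {γ z : ℝ} : 1 / |z - 1| ^ γ - 1 / |z + 1| ^ γ ≤ 1 / |z - 1| ^ γ := by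
  have : (0:ℝ) ≤ 1 / |z + 1| ^ γ := by positivity
  linarith

private lemma g_decay {γ : ℝ} (hγ : 0 < γ) {z : ℝ} (hz : 2 ≤ z) :
    1 / |z - 1| ^ γ - 1 / |z + 1| ^ γ ≤ γ * 2 ^ (γ + 1) * 2 * z ^ (-γ - 1) := by
  have hz1 : (0:ℝ) < z - 1 := by linarith
  have e1 : |z - 1| = z - 1 := abs_of_pos hz1
  have e2 : |z + 1| = z + 1 := abs_of_pos (by linarith)
  rw [e1, e2, one_div, one_div, ← Real.rpow_neg hz1.le, ← Real.rpow_neg (by linarith : (0:ℝ) ≤ z + 1)]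
  have h4 : (z - 1) ^ (-γ) - (z + 1) ^ (-γ) ≤ γ * (z - 1) ^ (-γ - 1) * 2 := by
    have := mvt_rpow hγ hz1 (by linarith : z - 1 ≤ z + 1)
    calc (z - 1) ^ (-γ) - (z + 1) ^ (-γ) ≤ γ * (z - 1) ^ (-γ - 1) * (z + 1 - (z - 1)) := this
    _ = γ * (z - 1) ^ (-γ - 1) * 2 := by ring_nf
  have h5 : (z - 1) ^ (-γ - 1) ≤ z ^ (-γ - 1) * 2 ^ (γ + 1) := by
    have hhalf : (0:ℝ) < z / 2 := by linarith
    calc (z - 1) ^ (-γ - 1) ≤ (z / 2) ^ (-γ - 1) :=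
          Real.rpow_le_rpow_of_nonpos hhalf (by linarith) (by linarith)
    _ = z ^ (-γ - 1) * ((2:ℝ)⁻¹) ^ (-γ - 1) := by
          rw [div_eq_mul_inv, Real.mul_rpow (by linarith : (0:ℝ) ≤ z) (by norm_num)]
    _ = z ^ (-γ - 1) * 2 ^ (γ + 1) := by
          rw [Real.inv_rpow (by norm_num : (0:ℝ) ≤ 2), show -γ - 1 = -(γ + 1) by ring,
            Real.rpow_neg (by norm_num : (0:ℝ) ≤ 2), inv_inv]
  have h6 : (0:ℝ) ≤ γ * 2 := by linarith
  nlinarith [Real.rpow_nonneg (by linarith : (0:ℝ) ≤ z) (-γ - 1),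
    Real.rpow_nonneg (by norm_num : (0:ℝ) ≤ (2:ℝ)) (γ + 1),
    mul_le_mul_of_nonneg_left h5 hγ.le]

private lemma integrable_bound {γ p : ℝ} (hp : 0 < p) (hpγ : p < γ) (hγ1 : γ < 1) :
    IntegrableOn (fun z : ℝ => (1 / |z - 1| ^ γ - 1 / |z + 1| ^ γ) * (z + 1) ^ p) (Ioi 0) := by
  have hγ0 : 0 < γ := hp.trans hpγ
  have hmeas : Measurable (fun z : ℝ => (1 / |z - 1| ^ γ - 1 / |z + 1| ^ γ) * (z + 1) ^ p) := by
    fun_prop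
  have hne1 : ∀ᵐ z : ℝ, z ≠ (1:ℝ) := by
    simpa using (Set.countable_singleton (1:ℝ)).ae_notMem volume
  rw [← Ioc_union_Ioi_eq_Ioi (by norm_num : (0:ℝ) ≤ 2)]
  refine IntegrableOn.union ?_ ?_
  · have h01 : IntegrableOn (fun t : ℝ => |t| ^ (-γ)) (Ioo 0 1) := by
      have A : IntegrableOn (fun t : ℝ => t ^ (-γ)) (Ioo (0:ℝ) 1) := by
        have B := intervalIntegral.intervalIntegrable_rpow' (a := (0:ℝ)) (b := 1) (show (-1:ℝ) < -γ by linarith)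
        rwa [intervalIntegrable_iff_integrableOn_Ioo_of_le zero_le_one] at B
      exact A.congr_fun (fun t ht => by rw [abs_of_pos ht.1]) measurableSet_Ioo
    have hI01 : IntervalIntegrable (fun t : ℝ => |t| ^ (-γ)) volume 0 1 := by
      rw [intervalIntegrable_iff_integrableOn_Ioo_of_le zero_le_one]; exact h01
    have hIm0 : IntervalIntegrable (fun t : ℝ => |t| ^ (-γ)) volume (-1) 0 := by
      rw [IntervalIntegrable.iff_comp_neg]
      simp only [abs_neg, neg_neg, neg_zero]
      exact hI01.symm
    have hshift : IntervalIntegrable (fun z : ℝ => |z - 1| ^ (-γ)) volume 0 2 := by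
      have := (hIm0.trans hI01).comp_sub_right 1
      norm_num at this; exact this
    have hbase : IntegrableOn (fun z : ℝ => |z - 1| ^ (-γ)) (Ioc 0 2) := by
      rwa [intervalIntegrable_iff_integrableOn_Ioc_of_le (by norm_num)] at hshift
    refine (hbase.mul_const ((3:ℝ) ^ p)).mono' hmeas.aestronglyMeasurable.restrict ?_
    filter_upwards [ae_restrict_mem measurableSet_Ioc, ae_restrict_of_ae hne1] with z hz hz1
    have hz0 : 0 < z := hz.1
    have hg0 : 0 < 1 / |z - 1| ^ γ - 1 / |z + 1| ^ γ := g_pos hγ0 hz0 hz1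
    have hzp : (0:ℝ) ≤ (z + 1) ^ p := Real.rpow_nonneg (by linarith) p
    rw [Real.norm_eq_abs, abs_of_nonneg (mul_nonneg hg0.le hzp)]
    have h2 : (z + 1) ^ p ≤ (3:ℝ) ^ p := Real.rpow_le_rpow (by linarith) (by linarith [hz.2]) hp.le
    calc (1 / |z - 1| ^ γ - 1 / |z + 1| ^ γ) * (z + 1) ^ p ≤ (1 / |z - 1| ^ γ) * (3:ℝ) ^ p :=
          mul_le_mul g_le h2 hzp (by positivity)
    _ = |z - 1| ^ (-γ) * 3 ^ p := by rw [Real.rpow_neg (abs_nonneg _), one_div]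
  · have hint : IntegrableOn (fun z : ℝ => γ * 2 ^ (γ + 1) * 2 * 2 ^ p * z ^ (p - γ - 1)) (Ioi 2) :=
      (integrableOn_Ioi_rpow_of_lt (by linarith) two_pos).const_mul _
    refine hint.mono' hmeas.aestronglyMeasurable.restrict ?_
    filter_upwards [ae_restrict_mem measurableSet_Ioi] with z hz
    have hz2 : (2:ℝ) ≤ z := le_of_lt hz
    have hz0 : (0:ℝ) < z := by linarith
    have hg0 : 0 < 1 / |z - 1| ^ γ - 1 / |z + 1| ^ γ := g_pos hγ0 hz0 (by linarith)
    have hzp : (0:ℝ) ≤ (z + 1) ^ p := Real.rpow_nonneg (by linarith) p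
    rw [Real.norm_eq_abs, abs_of_nonneg (mul_nonneg hg0.le hzp)]
    have h6 : (z + 1) ^ p ≤ 2 ^ p * z ^ p := by
      calc (z + 1) ^ p ≤ (2 * z) ^ p := Real.rpow_le_rpow (by linarith) (by linarith) hp.le
      _ = 2 ^ p * z ^ p := Real.mul_rpow (by norm_num) hz0.le
    have h7 := g_decay hγ0 hz2
    have h8 : z ^ (-γ - 1) * z ^ p = z ^ (p - γ - 1) := by
      rw [← Real.rpow_add hz0]; congr 1; ring
    calc (1 / |z - 1| ^ γ - 1 / |z + 1| ^ γ) * (z + 1) ^ p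
        ≤ (γ * 2 ^ (γ + 1) * 2 * z ^ (-γ - 1)) * (2 ^ p * z ^ p) :=
          mul_le_mul h7 h6 hzp (by positivity)
    _ = γ * 2 ^ (γ + 1) * 2 * 2 ^ p * (z ^ (-γ - 1) * z ^ p) := by ring
    _ = γ * 2 ^ (γ + 1) * 2 * 2 ^ p * z ^ (p - γ - 1) := by rw [h8]

private lemma q_tendsto {p z : ℝ} (hp : 0 < p) (hz0 : 0 < z) :
    Tendsto (fun x : ℝ => (x ^ p)⁻¹ * ((x * z + 1) ^ p - 1)) atTop (𝓝 (z ^ p)) := by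
  have h1 : Tendsto (fun x : ℝ => (z + x⁻¹) ^ p) atTop (𝓝 (z ^ p)) := by
    have hcont : ContinuousAt (fun t : ℝ => t ^ p) z :=
      Real.continuousAt_rpow_const z p (Or.inl hz0.ne')
    have h2 : Tendsto (fun x : ℝ => z + x⁻¹) atTop (𝓝 z) := by
      simpa using tendsto_const_nhds.add (tendsto_inv_atTop_zero (𝕜 := ℝ))
    exact hcont.tendsto.comp h2
  have h3 : Tendsto (fun x : ℝ => x ^ (-p)) atTop (𝓝 0) := tendsto_rpow_neg_atTop hp
  have h4 := h1.sub h3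
  rw [sub_zero] at h4
  refine Tendsto.congr' ?_ h4
  filter_upwards [eventually_gt_atTop 0] with x hx0
  have e2 : (x * z + 1) ^ p = x ^ p * (z + x⁻¹) ^ p := by
    rw [show x * z + 1 = x * (z + x⁻¹) by field_simp,
      Real.mul_rpow hx0.le (by positivity)]
  have hxp : (0:ℝ) < x ^ p := Real.rpow_pos_of_pos hx0 p
  rw [e2, Real.rpow_neg hx0.le]
  field_simp

theorem U_asymptotics_infinity (γ p : ℝ) (hp : 0 < p) (hpγ : p < γ) (hγ1 : γ < 1) :
    0 < ∫ z in Set.Ioi (0 : ℝ), (1 / |z - 1| ^ γ - 1 / |z + 1| ^ γ) * z ^ p ∧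
    Tendsto
      (fun x : ℝ =>
        (∫ y in Set.Ioi (0 : ℝ),
          (1 / |y - x| ^ γ - 1 / |y + x| ^ γ) * ((y + 1) ^ p - 1)) / x ^ (1 - γ + p))
      atTop
      (nhds (∫ z in Set.Ioi (0 : ℝ), (1 / |z - 1| ^ γ - 1 / |z + 1| ^ γ) * z ^ p)) := by
  have hγ0 : 0 < γ := hp.trans hpγ
  have hne1 : ∀ᵐ z : ℝ, z ≠ (1:ℝ) := by
    simpa using (Set.countable_singleton (1:ℝ)).ae_notMem volume
  have hbound_int : IntegrableOn
      (fun z : ℝ => (1 / |z - 1| ^ γ - 1 / |z + 1| ^ γ) * (z + 1) ^ p) (Ioi 0) :=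
    integrable_bound hp hpγ hγ1
  have hlim_meas : Measurable (fun z : ℝ => (1 / |z - 1| ^ γ - 1 / |z + 1| ^ γ) * z ^ p) := by
    fun_prop
  have hlim_int : IntegrableOn
      (fun z : ℝ => (1 / |z - 1| ^ γ - 1 / |z + 1| ^ γ) * z ^ p) (Ioi 0) := by
    refine hbound_int.mono' hlim_meas.aestronglyMeasurable.restrict ?_
    filter_upwards [ae_restrict_mem measurableSet_Ioi, ae_restrict_of_ae hne1] with z hz hz1
    have hz0 : (0:ℝ) < z := hz
    have hg0 := g_pos hγ0 hz0 hz1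
    have hzp : (0:ℝ) ≤ z ^ p := Real.rpow_nonneg hz0.le p
    rw [Real.norm_eq_abs, abs_of_nonneg (mul_nonneg hg0.le hzp)]
    exact mul_le_mul_of_nonneg_left
      (Real.rpow_le_rpow hz0.le (by linarith) hp.le) hg0.le
  have hpos : 0 < ∫ z in Ioi (0:ℝ), (1 / |z - 1| ^ γ - 1 / |z + 1| ^ γ) * z ^ p := by
    have hnn : 0 ≤ᵐ[volume.restrict (Ioi 0)]
        fun z : ℝ => (1 / |z - 1| ^ γ - 1 / |z + 1| ^ γ) * z ^ p := by
      filter_upwards [ae_restrict_mem measurableSet_Ioi, ae_restrict_of_ae hne1] with z hz hz1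
      exact mul_nonneg (g_pos hγ0 hz hz1).le (Real.rpow_nonneg (le_of_lt hz) p)
    rw [setIntegral_pos_iff_support_of_nonneg_ae hnn hlim_int]
    refine lt_of_lt_of_le ?_ (measure_mono (?_ :
      Ioo (1:ℝ) 2 ⊆ Function.support (fun z : ℝ => (1 / |z - 1| ^ γ - 1 / |z + 1| ^ γ) * z ^ p)
        ∩ Ioi 0))
    · rw [Real.volume_Ioo]; norm_num
    · intro z hz
      have hz0 : (0:ℝ) < z := by linarith [hz.1]
      refine ⟨?_, hz0⟩
      exact ne_of_gt (mul_pos (g_pos hγ0 hz0 (ne_of_gt hz.1)) (Real.rpow_pos_of_pos hz0 p))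
  refine ⟨hpos, ?_⟩
  have hDCT : Tendsto
      (fun x : ℝ => ∫ z in Ioi (0:ℝ),
        (x ^ p)⁻¹ * ((1 / |z - 1| ^ γ - 1 / |z + 1| ^ γ) * ((x * z + 1) ^ p - 1)))
      atTop (𝓝 (∫ z in Ioi (0:ℝ), (1 / |z - 1| ^ γ - 1 / |z + 1| ^ γ) * z ^ p)) := by
    refine tendsto_integral_filter_of_dominated_convergence
      (fun z : ℝ => (1 / |z - 1| ^ γ - 1 / |z + 1| ^ γ) * (z + 1) ^ p) ?_ ?_ hbound_int ?_
    · filter_upwards [eventually_gt_atTop (0:ℝ)] with x _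
      have : Measurable (fun z : ℝ =>
          (x ^ p)⁻¹ * ((1 / |z - 1| ^ γ - 1 / |z + 1| ^ γ) * ((x * z + 1) ^ p - 1))) := by
        fun_prop
      exact this.aestronglyMeasurable.restrict
    · filter_upwards [eventually_ge_atTop (1:ℝ)] with x hx
      filter_upwards [ae_restrict_mem measurableSet_Ioi, ae_restrict_of_ae hne1] with z hz hz1
      have hx0 : (0:ℝ) < x := by linarith
      have hz0 : (0:ℝ) < z := hz
      have hg0 := g_pos hγ0 hz0 hz1
      have hxp : (0:ℝ) < x ^ p := Real.rpow_pos_of_pos hx0 p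
      have h1le : (1:ℝ) ≤ (x * z + 1) ^ p :=
        calc (1:ℝ) = (1:ℝ) ^ p := (Real.one_rpow p).symm
        _ ≤ (x * z + 1) ^ p := Real.rpow_le_rpow (by norm_num) (by nlinarith) hp.le
      have hub : (x * z + 1) ^ p ≤ x ^ p * (z + 1) ^ p := by
        rw [← Real.mul_rpow hx0.le (by linarith)]
        exact Real.rpow_le_rpow (by nlinarith) (by nlinarith) hp.le
      have hA : (x ^ p)⁻¹ * ((x * z + 1) ^ p - 1) ≤ (z + 1) ^ p := by
        rw [inv_mul_le_iff₀ hxp]; nlinarith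
      have hA0 : 0 ≤ (x ^ p)⁻¹ * ((x * z + 1) ^ p - 1) := by
        have : (0:ℝ) ≤ (x * z + 1) ^ p - 1 := by linarith
        positivity
      have key : (x ^ p)⁻¹ * ((1 / |z - 1| ^ γ - 1 / |z + 1| ^ γ) * ((x * z + 1) ^ p - 1))
          = (1 / |z - 1| ^ γ - 1 / |z + 1| ^ γ) * ((x ^ p)⁻¹ * ((x * z + 1) ^ p - 1)) := by
        ring
      rw [Real.norm_eq_abs, key, abs_of_nonneg (mul_nonneg hg0.le hA0)]
      exact mul_le_mul_of_nonneg_left hA hg0.le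
    · filter_upwards [ae_restrict_mem measurableSet_Ioi] with z hz
      have hq := q_tendsto hp (show (0:ℝ) < z from hz)
      have := hq.const_mul (1 / |z - 1| ^ γ - 1 / |z + 1| ^ γ)
      exact this.congr (fun x => by ring)
  refine Tendsto.congr' ?_ hDCT
  filter_upwards [eventually_gt_atTop (0:ℝ)] with x hx
  have hxγ : (0:ℝ) < x ^ γ := Real.rpow_pos_of_pos hx γ
  have hxp : (0:ℝ) < x ^ p := Real.rpow_pos_of_pos hx p
  have h1 := integral_comp_mul_left_Ioi
    (fun y => (1 / |y - x| ^ γ - 1 / |y + x| ^ γ) * ((y + 1) ^ p - 1)) 0 hx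
  simp only [mul_zero, smul_eq_mul] at h1
  have h2 : ∀ z : ℝ, (1 / |x * z - x| ^ γ - 1 / |x * z + x| ^ γ) * ((x * z + 1) ^ p - 1)
      = (x ^ γ)⁻¹ * ((1 / |z - 1| ^ γ - 1 / |z + 1| ^ γ) * ((x * z + 1) ^ p - 1)) := by
    intro z
    have e1 : |x * z - x| ^ γ = x ^ γ * |z - 1| ^ γ := by
      rw [show x * z - x = x * (z - 1) by ring, abs_mul, abs_of_pos hx,
        Real.mul_rpow hx.le (abs_nonneg _)]
    have e2 : |x * z + x| ^ γ = x ^ γ * |z + 1| ^ γ := by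
      rw [show x * z + x = x * (z + 1) by ring, abs_mul, abs_of_pos hx,
        Real.mul_rpow hx.le (abs_nonneg _)]
    rw [e1, e2, one_div, one_div, one_div, one_div, mul_inv, mul_inv]
    ring
  simp only [h2] at h1
  rw [integral_const_mul] at h1
  rw [integral_const_mul]
  have hpow : x ^ (1 - γ + p) = x * (x ^ γ)⁻¹ * x ^ p := by
    rw [show 1 - γ + p = 1 + -γ + p by ring, Real.rpow_add hx, Real.rpow_add hx,
      Real.rpow_one, Real.rpow_neg hx.le]
  have hU : (∫ y in Ioi (0:ℝ), (1 / |y - x| ^ γ - 1 / |y + x| ^ γ) * ((y + 1) ^ p - 1))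
      = x * ((x ^ γ)⁻¹ *
        ∫ z in Ioi (0:ℝ), (1 / |z - 1| ^ γ - 1 / |z + 1| ^ γ) * ((x * z + 1) ^ p - 1)) := by
    rw [h1, ← mul_assoc, mul_inv_cancel₀ hx.ne', one_mul]
  rw [hU, hpow]
  rw [mul_assoc x, mul_div_mul_left _ _ hx.ne', mul_div_mul_left _ _ (inv_ne_zero hxγ.ne'), inv_mul_eq_div]
end

section
/- Let γ ∈ (0,1) and p = γ/2, f(z) = (z+1)^p - 1, and U(z) = ∫₀^∞ (|y-z|^{-γ} - |y+z|^{-γ}) f(y) dy. Then there exists a constant c > 0 such that U(z) f'(z) / (-p f(z) + z f'(z)) ≥ c for all z > 0. -/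
open Real MeasureTheory Filter

theorem ratio_bounded_below (γ : ℝ) (hγ : 0 < γ) (hγ1 : γ < 1)
    (p : ℝ) (hp : p = γ / 2)
    (U : ℝ → ℝ)
    (hU : ∀ z, U z = ∫ y in Set.Ioi (0 : ℝ),
      (1 / |y - z| ^ γ - 1 / |y + z| ^ γ) * ((y + 1) ^ p - 1))
    (hUcont : ContinuousOn U (Set.Ioi 0))
    (hUpos : ∀ z > (0:ℝ), 0 < U z)
    (hUzero : ∃ c₁ > (0:ℝ),
      Tendsto (fun z => U z / z) (nhdsWithin 0 (Set.Ioi 0)) (nhds c₁))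
    (hUinfty : ∃ C > (0:ℝ),
      Tendsto (fun z => U z / z ^ (1 - γ + p)) atTop (nhds C)) :
    ∃ c > 0, ∀ z > (0:ℝ),
      c ≤ U z * (p * (z + 1) ^ (p - 1)) /
        (-p * ((z + 1) ^ p - 1) + z * (p * (z + 1) ^ (p - 1))) := by
  clear hU
  obtain ⟨c₁, hc₁, hzero⟩ := hUzero
  obtain ⟨C, hC, hinf⟩ := hUinfty
  have hp0 : 0 < p := by rw [hp]; linarith
  have hp1 : p < 1 := by rw [hp]; linarith
  have hq : 0 < 1 - p := by linarith
  set A : ℝ → ℝ := fun z => (z + 1) ^ (p - 1) with hA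
  have hApos : ∀ z : ℝ, 0 < z → 0 < A z := fun z hz =>
    rpow_pos_of_pos (by linarith) _
  have hAlt1 : ∀ z : ℝ, 0 < z → A z < 1 := fun z hz =>
    rpow_lt_one_of_one_lt_of_neg (by linarith) (by linarith)
  have hBle : ∀ z : ℝ, 0 < z → 1 - A z ≤ (1 - p) * z := by
    intro z hz
    have hber : (z + 1) ^ (1 - p) ≤ 1 + (1 - p) * z := by
      have h1 : (z + 1 : ℝ) = 1 + z := by ring
      rw [h1]
      exact rpow_one_add_le_one_add_mul_self (by linarith) (by linarith) (by linarith)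
    have hmul : A z * (z + 1) ^ (1 - p) = 1 := by
      rw [hA]
      simp only
      rw [← rpow_add (by linarith : (0:ℝ) < z + 1)]
      norm_num
    nlinarith [hApos z hz, hAlt1 z hz,
      rpow_pos_of_pos (show (0:ℝ) < z + 1 by linarith) (1 - p)]
  -- rewrite the ratio
  have key : ∀ z : ℝ, 0 < z →
      U z * (p * (z + 1) ^ (p - 1)) /
        (-p * ((z + 1) ^ p - 1) + z * (p * (z + 1) ^ (p - 1)))
      = U z * A z / (1 - A z) := by
    intro z hz
    have hsplit : (z + 1) ^ p = (z + 1) ^ (p - 1) * (z + 1) := by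
      have h := rpow_add (show (0:ℝ) < z + 1 by linarith) (p - 1) 1
      rw [rpow_one] at h
      rw [show p - 1 + 1 = p by ring] at h
      exact h
    have hden : -p * ((z + 1) ^ p - 1) + z * (p * (z + 1) ^ (p - 1))
        = p * (1 - A z) := by
      rw [hsplit, hA]; ring
    have hnum : U z * (p * (z + 1) ^ (p - 1)) = p * (U z * A z) := by
      rw [hA]; ring
    rw [hden, hnum, mul_div_mul_left _ _ hp0.ne']
  -- near zero
  have hev0 : ∀ᶠ z in nhdsWithin 0 (Set.Ioi 0), c₁ / 2 < U z / z :=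
    hzero.eventually (eventually_gt_nhds (by linarith))
  obtain ⟨δ₀, hδ₀mem, hδ₀⟩ := mem_nhdsGT_iff_exists_Ioo_subset.mp hev0
  have hδ₀pos : (0:ℝ) < δ₀ := hδ₀mem
  set δ : ℝ := min δ₀ 1 with hδ
  have hδpos : 0 < δ := lt_min hδ₀pos one_pos
  have hδle1 : δ ≤ 1 := min_le_right _ _
  -- at infinity
  have hevI : ∀ᶠ z in atTop, C / 2 < U z / z ^ (1 - γ + p) :=
    hinf.eventually (eventually_gt_nhds (by linarith))
  obtain ⟨M₀, hM₀⟩ := eventually_atTop.mp hevI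
  set M : ℝ := max M₀ (max 1 δ) with hM
  have hM1 : (1:ℝ) ≤ M := le_trans (le_max_left 1 δ) (le_max_right _ _)
  have hδM : δ ≤ M := le_trans (le_max_right 1 δ) (le_max_right _ _)
  have hMM₀ : M₀ ≤ M := le_max_left _ _
  -- middle compact minimum
  have hsub : Set.Icc δ M ⊆ Set.Ioi 0 := fun x hx => lt_of_lt_of_le hδpos hx.1
  obtain ⟨z₀, hz₀mem, hz₀min⟩ :=
    isCompact_Icc.exists_isMinOn ⟨δ, le_refl δ, hδM⟩ (hUcont.mono hsub)
  have hm : 0 < U z₀ := hUpos z₀ (hsub hz₀mem)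
  -- constants
  have h2p : (0:ℝ) < (2:ℝ) ^ (p - 1) := rpow_pos_of_pos two_pos _
  have hMp : (0:ℝ) < (M + 1) ^ (p - 1) := rpow_pos_of_pos (by linarith) _
  set ca : ℝ := c₁ / 2 * (2:ℝ) ^ (p - 1) / (1 - p) with hca
  set cb : ℝ := U z₀ * (M + 1) ^ (p - 1) with hcb
  set cc : ℝ := C / 2 * (2:ℝ) ^ (p - 1) with hcc
  have hcapos : 0 < ca := by positivity
  have hcbpos : 0 < cb := by positivity
  have hccpos : 0 < cc := by positivity
  refine ⟨min ca (min cb cc), by positivity, fun z hz => ?_⟩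
  rw [key z hz]
  have hAz := hApos z hz
  have hAz1 := hAlt1 z hz
  have hBpos : 0 < 1 - A z := by linarith
  have hUz := hUpos z hz
  rcases lt_or_ge z δ with hzδ | hzδ
  · -- small z
    have hUq : c₁ / 2 < U z / z := hδ₀ ⟨hz, lt_of_lt_of_le hzδ (min_le_left _ _)⟩
    have hA2 : (2:ℝ) ^ (p - 1) ≤ A z := by
      rw [hA]
      exact rpow_le_rpow_of_nonpos (by linarith) (by nlinarith [hδle1]) (by linarith)
    have hstep : U z * A z / ((1 - p) * z) ≤ U z * A z / (1 - A z) :=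
      div_le_div_of_nonneg_left (by positivity) hBpos (hBle z hz)
    have heq : U z / z * A z / (1 - p) = U z * A z / ((1 - p) * z) := by
      field_simp
    have h1 : ca ≤ U z / z * A z / (1 - p) := by
      rw [hca]
      have h0 : c₁ / 2 * (2:ℝ) ^ (p - 1) ≤ U z / z * A z :=
        mul_le_mul hUq.le hA2 h2p.le (le_of_lt (lt_trans (by positivity) hUq))
      exact (div_le_div_iff_of_pos_right hq).mpr h0
    calc min ca (min cb cc) ≤ ca := min_le_left _ _
      _ ≤ U z / z * A z / (1 - p) := h1
      _ = U z * A z / ((1 - p) * z) := heq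
      _ ≤ U z * A z / (1 - A z) := hstep
  · rcases le_or_gt z M with hzM | hzM
    · -- middle z
      have hge : U z * A z ≤ U z * A z / (1 - A z) := by
        rw [le_div_iff₀ hBpos]
        exact mul_le_of_le_one_right (mul_nonneg hUz.le hAz.le) (by linarith)
      refine le_trans ?_ hge
      have hAM : (M + 1) ^ (p - 1) ≤ A z := by
        rw [hA]
        exact rpow_le_rpow_of_nonpos (by linarith) (by linarith) (by linarith)
      have hUm : U z₀ ≤ U z := isMinOn_iff.mp hz₀min z ⟨hzδ, hzM⟩
      calc min ca (min cb cc) ≤ cb := le_trans (min_le_right _ _) (min_le_left _ _)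
        _ ≤ U z * A z := mul_le_mul hUm hAM hMp.le hUz.le
    · -- large z
      have hz1 : (1:ℝ) ≤ z := le_trans hM1 hzM.le
      have hge : U z * A z ≤ U z * A z / (1 - A z) := by
        rw [le_div_iff₀ hBpos]
        exact mul_le_of_le_one_right (mul_nonneg hUz.le hAz.le) (by linarith)
      refine le_trans ?_ hge
      have hzpow : (0:ℝ) < z ^ (1 - γ + p) := rpow_pos_of_pos hz _
      have hUq : C / 2 < U z / z ^ (1 - γ + p) := hM₀ z (le_trans hMM₀ hzM.le)
      have hUlb : C / 2 * z ^ (1 - γ + p) ≤ U z := by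
        rw [lt_div_iff₀ hzpow] at hUq
        linarith
      have hAlb : (2:ℝ) ^ (p - 1) * z ^ (p - 1) ≤ A z := by
        have h2z : (2 * z) ^ (p - 1) ≤ (z + 1) ^ (p - 1) :=
          rpow_le_rpow_of_nonpos (by linarith) (by linarith) (by linarith)
        rwa [mul_rpow (by norm_num) (by linarith)] at h2z
      have hprod : z ^ (1 - γ + p) * z ^ (p - 1) = 1 := by
        rw [← rpow_add (by linarith : (0:ℝ) < z)]
        have : 1 - γ + p + (p - 1) = 0 := by rw [hp]; ring
        rw [this, rpow_zero]
      calc min ca (min cb cc) ≤ cc := le_trans (min_le_right _ _) (min_le_right _ _)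
        _ = C / 2 * (2:ℝ) ^ (p - 1) * (z ^ (1 - γ + p) * z ^ (p - 1)) := by
            rw [hprod, mul_one]
        _ = C / 2 * z ^ (1 - γ + p) * ((2:ℝ) ^ (p - 1) * z ^ (p - 1)) := by ring
        _ ≤ U z * A z := mul_le_mul hUlb hAlb (by positivity) hUz.le
end
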